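/- arXiv:1701.07521 — 11 statements merged into one kernel-verified Lean document; each statement's English description precedes it below -/
import Mathlib

section
/- Let q > 2 be a natural number. Among all quadruples (a,b,c,d) of integers with 0 ≤ a,b,c,d ≤ 2q−1, the number of quadruples satisfying a − b − c + d ≡ 0 (mod 2q) equals 8q³, and the number of quadruples satisfying both a − b − c + d ≡ 0 (mod 2q) and ⌊a/2⌋ − ⌊b/2⌋ − ⌊c/2⌋ + ⌊d/2⌋ ≡ 0 (mod q) equals 6q³. Consequently, a uniformly random exponent chain that forms a cycle for circulant size 2q forms a cycle after floor lifting with probability 3/4. -/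
/-- The finite set of exponent chains of length 4 for circulant size `2q`:
quadruples `(a,b,c,d)` of integers with `0 ≤ a,b,c,d ≤ 2q-1`. -/
noncomputable abbrev expChains (q : ℕ) : Finset (ℤ × ℤ × ℤ × ℤ) :=
  Finset.Icc (0:ℤ) (2 * q - 1) ×ˢ Finset.Icc (0:ℤ) (2 * q - 1) ×ˢ
    Finset.Icc (0:ℤ) (2 * q - 1) ×ˢ Finset.Icc (0:ℤ) (2 * q - 1)

/-- The chain forms a cycle for circulant size `2q`. -/
abbrev isCycle (q : ℕ) (x : ℤ × ℤ × ℤ × ℤ) : Prop :=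
  (x.1 - x.2.1 - x.2.2.1 + x.2.2.2) % (2 * q) = 0

/-- The floor-lifted chain (entries `⌊e/2⌋`) forms a cycle for circulant size `q`. -/
abbrev isFloorCycle (q : ℕ) (x : ℤ × ℤ × ℤ × ℤ) : Prop :=
  (x.1 / 2 - x.2.1 / 2 - x.2.2.1 / 2 + x.2.2.2 / 2) % q = 0

/-!
Write each entry as `e = 2 * ⌊e/2⌋ + e % 2`, splitting a chain `x` into its floor lift `y` and its
parity pattern `r ∈ {0,1}⁴`; the alternating sum splits as `alt x = 2 * alt y + alt r`. If `2q ∣ alt x`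
and `q ∣ alt y`, then `2q ∣ alt r ∈ [-2, 2]`, so `alt r = 0` once `q > 1`; conversely `alt r = 0` and
`q ∣ alt y` give both cycle conditions. Hence the chains satisfying both conditions correspond to
pairs of a cycle for size `q` and one of the six zero-sum parity patterns. Cycles for size `n` number
`n³`, since the first entry is determined modulo `n` by the other three.
-/

open Finset

namespace ExpChain

noncomputable section

def quadBox (n : ℤ) : Finset (ℤ × ℤ × ℤ × ℤ) :=
  Icc 0 (n - 1) ×ˢ Icc 0 (n - 1) ×ˢ Icc 0 (n - 1) ×ˢ Icc 0 (n - 1)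

def altSum (x : ℤ × ℤ × ℤ × ℤ) : ℤ := x.1 - x.2.1 - x.2.2.1 + x.2.2.2

def halve (x : ℤ × ℤ × ℤ × ℤ) : ℤ × ℤ × ℤ × ℤ := (x.1 / 2, x.2.1 / 2, x.2.2.1 / 2, x.2.2.2 / 2)

def parity (x : ℤ × ℤ × ℤ × ℤ) : ℤ × ℤ × ℤ × ℤ := (x.1 % 2, x.2.1 % 2, x.2.2.1 % 2, x.2.2.2 % 2)

def unhalve (y r : ℤ × ℤ × ℤ × ℤ) : ℤ × ℤ × ℤ × ℤ :=
  (2 * y.1 + r.1, 2 * y.2.1 + r.2.1, 2 * y.2.2.1 + r.2.2.1, 2 * y.2.2.2 + r.2.2.2)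

def cycleChains (n : ℤ) : Finset (ℤ × ℤ × ℤ × ℤ) :=
  (quadBox n).filter fun x => altSum x % n = 0

def floorCycleChains (q : ℤ) : Finset (ℤ × ℤ × ℤ × ℤ) :=
  (quadBox (2 * q)).filter fun x => altSum x % (2 * q) = 0 ∧ altSum (halve x) % q = 0

def parityCycles : Finset (ℤ × ℤ × ℤ × ℤ) := (quadBox 2).filter fun r => altSum r = 0

end

theorem card_cycleChains {n : ℤ} (hn : 0 < n) : ((cycleChains n).card : ℤ) = n ^ 3 := by
  have hbij : (cycleChains n).card = (Icc 0 (n - 1) ×ˢ Icc 0 (n - 1) ×ˢ Icc 0 (n - 1)).card := by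
    refine card_nbij' Prod.snd (fun y => ((y.1 + y.2.1 - y.2.2) % n, y)) ?_ ?_ ?_ ?_
    · intro x h
      rw [cycleChains, quadBox, coe_filter] at h
      exact (mem_product.mp h.1).2
    · rintro ⟨b, c, d⟩ h
      have hsum : altSum ((b + c - d) % n, b, c, d) = (b + c - d) % n - (b + c - d) := by
        simp only [altSum]; ring
      rw [cycleChains, coe_filter]
      refine ⟨mem_product.mpr ⟨mem_Icc.mpr ⟨Int.emod_nonneg _ hn.ne', ?_⟩, h⟩, ?_⟩
      · linarith [Int.emod_lt_of_pos (b + c - d) hn]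
      · show altSum ((b + c - d) % n, b, c, d) % n = 0
        rw [hsum]
        exact Int.emod_eq_zero_of_dvd (Int.mod_modEq _ n).symm.dvd
    · rintro ⟨a, b, c, d⟩ h
      simp only [cycleChains, quadBox, coe_filter, mem_product, mem_Icc] at h
      obtain ⟨⟨⟨ha0, ha1⟩, -⟩, hcyc⟩ := h
      have hmod : b + c - d ≡ a [ZMOD n] := by
        refine Int.modEq_iff_dvd.mpr ?_
        convert Int.dvd_of_emod_eq_zero hcyc using 1
        simp only [altSum]; ring
      simp only [Prod.mk.injEq, and_true]
      rw [hmod.eq, Int.emod_eq_of_lt ha0 (by omega)]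
    · intro y _
      rfl
  rw [hbij]
  simp only [card_product, Int.card_Icc, sub_zero, sub_add_cancel]
  push_cast
  rw [Int.toNat_of_nonneg hn.le]
  ring

theorem card_parityCycles : parityCycles.card = 6 := by decide

theorem altSum_unhalve (y r : ℤ × ℤ × ℤ × ℤ) :
    altSum (unhalve y r) = 2 * altSum y + altSum r := by
  simp only [altSum, unhalve]; ring

theorem unhalve_halve_parity (x : ℤ × ℤ × ℤ × ℤ) : unhalve (halve x) (parity x) = x := by
  obtain ⟨a, b, c, d⟩ := x
  simp only [unhalve, halve, parity, Prod.mk.injEq]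
  omega

theorem halve_unhalve (y : ℤ × ℤ × ℤ × ℤ) {r : ℤ × ℤ × ℤ × ℤ} (hr : r ∈ quadBox 2) :
    halve (unhalve y r) = y := by
  obtain ⟨a, b, c, d⟩ := y
  simp only [quadBox, mem_product, mem_Icc] at hr
  simp only [halve, unhalve, Prod.mk.injEq]
  omega

theorem parity_unhalve (y : ℤ × ℤ × ℤ × ℤ) {r : ℤ × ℤ × ℤ × ℤ} (hr : r ∈ quadBox 2) :
    parity (unhalve y r) = r := by
  obtain ⟨a, b, c, d⟩ := r
  simp only [quadBox, mem_product, mem_Icc] at hr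
  simp only [parity, unhalve, Prod.mk.injEq]
  omega

theorem altSum_parity_eq_zero {q : ℤ} (hq : 1 < q) {x : ℤ × ℤ × ℤ × ℤ}
    (hx : altSum x % (2 * q) = 0) (hhalf : altSum (halve x) % q = 0) :
    altSum (parity x) = 0 := by
  have hdvd : 2 * q ∣ altSum (parity x) := by
    have hsplit := altSum_unhalve (halve x) (parity x)
    rw [unhalve_halve_parity] at hsplit
    have := dvd_sub (Int.dvd_of_emod_eq_zero hx)
      (mul_dvd_mul_left 2 (Int.dvd_of_emod_eq_zero hhalf))
    rwa [hsplit, add_sub_cancel_left] at this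
  refine Int.eq_zero_of_abs_lt_dvd hdvd ?_
  simp only [altSum, parity, abs_lt]
  omega

theorem card_floorCycleChains {q : ℤ} (hq : 1 < q) :
    ((floorCycleChains q).card : ℤ) = 6 * q ^ 3 := by
  have hbij : (floorCycleChains q).card = (cycleChains q ×ˢ parityCycles).card := by
    refine card_nbij' (fun x => (halve x, parity x)) (fun p => unhalve p.1 p.2) ?_ ?_ ?_ ?_
    · rintro ⟨a, b, c, d⟩ h
      simp only [floorCycleChains, cycleChains, parityCycles, quadBox, coe_filter, coe_product,
        Set.mem_prod, Set.mem_ofPred, mem_product, mem_Icc] at h ⊢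
      refine ⟨⟨?_, h.2.2⟩, ?_, altSum_parity_eq_zero hq h.2.1 h.2.2⟩
      · simp only [halve]; omega
      · simp only [parity]; omega
    · rintro ⟨y, r⟩ h
      simp only [cycleChains, parityCycles, coe_product, Set.mem_prod, mem_coe, mem_filter] at h
      rw [floorCycleChains, coe_filter]
      refine ⟨?_, ?_, by rw [halve_unhalve y h.2.1]; exact h.1.2⟩
      · obtain ⟨⟨hy, -⟩, hr, -⟩ := h
        simp only [quadBox, mem_product, mem_Icc] at hy hr ⊢
        simp only [unhalve]
        omega
      · rw [altSum_unhalve, h.2.2, add_zero]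
        exact Int.emod_eq_zero_of_dvd (mul_dvd_mul_left 2 (Int.dvd_of_emod_eq_zero h.1.2))
    · intro x _
      exact unhalve_halve_parity x
    · rintro ⟨y, r⟩ h
      simp only [parityCycles, coe_product, Set.mem_prod, mem_coe, mem_filter] at h
      exact Prod.ext (halve_unhalve y h.2.1) (parity_unhalve y h.2.1)
  rw [hbij, card_product, Nat.cast_mul, card_cycleChains (by omega), card_parityCycles]
  ring

end ExpChain

open ExpChain in
theorem stmt_0 (q : ℕ) (hq : 2 < q) :
    ((expChains q).filter (fun x => isCycle q x)).card = 8 * q ^ 3 ∧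
    ((expChains q).filter (fun x => isCycle q x ∧ isFloorCycle q x)).card = 6 * q ^ 3 ∧
    (((expChains q).filter (fun x => isCycle q x ∧ isFloorCycle q x)).card : ℚ) /
      (((expChains q).filter (fun x => isCycle q x)).card : ℚ) = 3 / 4 := by
  have hcycle : ((expChains q).filter (fun x => isCycle q x)).card = 8 * q ^ 3 := by
    have h := card_cycleChains (n := 2 * q) (by omega)
    zify
    exact h.trans (by ring)
  have hfloor :
      ((expChains q).filter (fun x => isCycle q x ∧ isFloorCycle q x)).card = 6 * q ^ 3 := by
    zify
    exact card_floorCycleChains (q := q) (by omega)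
  refine ⟨hcycle, hfloor, ?_⟩
  rw [hcycle, hfloor]
  have hq0 : (q : ℚ) ≠ 0 := by positivity
  push_cast
  field_simp
  ring
end

section
/- Let q > 2 be a natural number. Among all quadruples (a,b,c,d) of integers with 0 ≤ a,b,c,d ≤ 2q−1, the number of quadruples satisfying a − b − c + d ≢ 0 (mod 2q) and ⌊a/2⌋ − ⌊b/2⌋ − ⌊c/2⌋ + ⌊d/2⌋ ≡ 0 (mod q) equals 10q³. Consequently, a uniformly random exponent chain that does not form a cycle for circulant size 2q forms a cycle after floor lifting with probability 5/(4(2q−1)). -/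
/-!
Write each entry `e ∈ [0, 2q)` as `e = 2u + r` with `u = ⌊e/2⌋ ∈ [0, q)` and `r ∈ {0, 1}`. Then
`a - b - c + d = 2s + ρ`, where `s` and `ρ` are the alternating sums of the quotients and of the
bits, and `|ρ| ≤ 2`. If the floor-lifted chain is a cycle then `q ∣ s`, so the chain is a cycle
modulo `2q` iff `2q ∣ ρ`, i.e. (as `2q > 2`) iff `ρ = 0`. The quotients therefore range over the
cycles modulo `q`, of which there are `q³` because `a` is determined by `b, c, d`, and the bits over
the `10` patterns with `ρ ≠ 0`.
-/

open Finset

noncomputable def quadBox (m : ℤ) : Finset (ℤ × ℤ × ℤ × ℤ) :=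
  Icc 0 (m - 1) ×ˢ Icc 0 (m - 1) ×ˢ Icc 0 (m - 1) ×ˢ Icc 0 (m - 1)

def altSum (x : ℤ × ℤ × ℤ × ℤ) : ℤ := x.1 - x.2.1 - x.2.2.1 + x.2.2.2

def quadMap (f : ℤ → ℤ) (x : ℤ × ℤ × ℤ × ℤ) : ℤ × ℤ × ℤ × ℤ :=
  (f x.1, f x.2.1, f x.2.2.1, f x.2.2.2)

lemma mem_quadBox {m : ℤ} {x : ℤ × ℤ × ℤ × ℤ} :
    x ∈ quadBox m ↔ (0 ≤ x.1 ∧ x.1 ≤ m - 1) ∧ (0 ≤ x.2.1 ∧ x.2.1 ≤ m - 1) ∧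
      (0 ≤ x.2.2.1 ∧ x.2.2.1 ≤ m - 1) ∧ (0 ≤ x.2.2.2 ∧ x.2.2.2 ≤ m - 1) := by
  simp only [quadBox, mem_product, mem_Icc]

lemma card_quadBox (m : ℤ) : #(quadBox m) = m.toNat ^ 4 := by
  simp only [quadBox, card_product, Int.card_Icc, sub_add_cancel, sub_zero]
  ring

lemma Int.emod_sub_eq_zero_iff_eq_emod {m a t : ℤ} (ha : 0 ≤ a) (ham : a < m) :
    (a - t) % m = 0 ↔ a = t % m := by
  rw [← Int.emod_eq_emod_iff_emod_sub_eq_zero, Int.emod_eq_of_lt ha ham]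

lemma card_filter_altSum_emod_eq_zero (m : ℤ) :
    #((quadBox m).filter fun x => altSum x % m = 0) = m.toNat ^ 3 := by
  have hbox : #(Icc 0 (m - 1) ×ˢ Icc 0 (m - 1) ×ˢ Icc 0 (m - 1)) = m.toNat ^ 3 := by
    simp only [card_product, Int.card_Icc, sub_add_cancel, sub_zero]
    ring
  rw [← hbox]
  refine card_nbij' (fun x => x.2) (fun y => ((y.1 + y.2.1 - y.2.2) % m, y)) ?_ ?_ ?_ ?_
  · rintro ⟨a, b, c, d⟩ hx
    simp only [mem_coe, mem_filter, mem_quadBox] at hx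
    simp only [mem_coe, mem_product, mem_Icc]
    omega
  · rintro ⟨b, c, d⟩ hy
    simp only [mem_coe, mem_product, mem_Icc] at hy
    have hm : 0 < m := by omega
    rw [mem_coe, mem_filter, mem_quadBox]
    refine ⟨⟨⟨Int.emod_nonneg _ hm.ne', ?_⟩, hy⟩, ?_⟩
    · linarith [Int.emod_lt_of_pos (b + c - d) hm]
    · rw [altSum, show (b + c - d) % m - b - c + d = (b + c - d) % m - (b + c - d) by ring,
        Int.sub_emod, Int.emod_emod_of_dvd _ dvd_rfl, sub_self, Int.zero_emod]
  · rintro ⟨a, b, c, d⟩ hx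
    rw [mem_coe, mem_filter, mem_quadBox, altSum] at hx
    obtain ⟨⟨ha, -⟩, hcyc⟩ := hx
    rw [show a - b - c + d = a - (b + c - d) by ring,
      Int.emod_sub_eq_zero_iff_eq_emod ha.1 (by omega)] at hcyc
    exact Prod.ext hcyc.symm rfl
  · intro y _
    rfl

lemma Int.two_mul_add_emod_two_mul_eq_zero_iff {q s r : ℤ} (hq : 1 < q) (hs : q ∣ s)
    (hr : |r| ≤ 2) : (2 * s + r) % (2 * q) = 0 ↔ r = 0 := by
  obtain ⟨k, rfl⟩ := hs
  rw [show 2 * (q * k) + r = r + 2 * q * k by ring, Int.add_mul_emod_self_left]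
  constructor
  · intro h
    exact Int.eq_zero_of_abs_lt_dvd (Int.dvd_of_emod_eq_zero h) (by omega)
  · rintro rfl
    rfl

lemma altSum_eq_two_mul_altSum_div_add_altSum_mod (x : ℤ × ℤ × ℤ × ℤ) :
    altSum x = 2 * altSum (quadMap (· / 2) x) + altSum (quadMap (· % 2) x) := by
  simp only [altSum, quadMap]
  omega

lemma isCycle_iff_of_isFloorCycle {q : ℕ} (hq : 1 < q) {x : ℤ × ℤ × ℤ × ℤ}
    (hx : isFloorCycle q x) : isCycle q x ↔ altSum (quadMap (· % 2) x) = 0 := by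
  change altSum x % (2 * (q : ℤ)) = 0 ↔ _
  rw [altSum_eq_two_mul_altSum_div_add_altSum_mod]
  refine Int.two_mul_add_emod_two_mul_eq_zero_iff (by exact_mod_cast hq)
    (Int.dvd_of_emod_eq_zero hx) ?_
  simp only [altSum, quadMap, abs_le]
  omega

def quadOfDigits (r u : ℤ × ℤ × ℤ × ℤ) : ℤ × ℤ × ℤ × ℤ :=
  (2 * u.1 + r.1, 2 * u.2.1 + r.2.1, 2 * u.2.2.1 + r.2.2.1, 2 * u.2.2.2 + r.2.2.2)

lemma quadOfDigits_quadMap (x : ℤ × ℤ × ℤ × ℤ) :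
    quadOfDigits (quadMap (· % 2) x) (quadMap (· / 2) x) = x := by
  simp only [quadOfDigits, quadMap]
  ext <;> simp only <;> omega

section

variable {r u : ℤ × ℤ × ℤ × ℤ}

lemma quadMap_emod_two_quadOfDigits (hr : r ∈ quadBox 2) :
    quadMap (· % 2) (quadOfDigits r u) = r := by
  rw [mem_quadBox] at hr
  simp only [quadOfDigits, quadMap]
  ext <;> simp only <;> omega

lemma quadMap_div_two_quadOfDigits (hr : r ∈ quadBox 2) :
    quadMap (· / 2) (quadOfDigits r u) = u := by
  rw [mem_quadBox] at hr
  simp only [quadOfDigits, quadMap]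
  ext <;> simp only <;> omega

lemma quadOfDigits_mem_quadBox_two_mul {m : ℤ} (hr : r ∈ quadBox 2) (hu : u ∈ quadBox m) :
    quadOfDigits r u ∈ quadBox (2 * m) := by
  rw [mem_quadBox] at hr hu ⊢
  simp only [quadOfDigits]
  omega

end

lemma card_not_isCycle_and_isFloorCycle (q : ℕ) (hq : 1 < q) :
    #((expChains q).filter fun x => ¬ isCycle q x ∧ isFloorCycle q x) = 10 * q ^ 3 := by
  have hbits : #((quadBox 2).filter fun r => altSum r ≠ 0) = 10 := by decide
  have hquot := card_filter_altSum_emod_eq_zero q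
  rw [Int.toNat_natCast] at hquot
  rw [← hquot, ← hbits, ← card_product]
  refine card_nbij' (fun x => (quadMap (· % 2) x, quadMap (· / 2) x))
    (fun p => quadOfDigits p.1 p.2) ?_ ?_ (fun x _ => quadOfDigits_quadMap x) ?_
  · intro x hx
    rw [mem_coe, mem_filter] at hx
    obtain ⟨hbox, hnc, hfc⟩ := hx
    change x ∈ quadBox (2 * q) at hbox
    rw [mem_quadBox] at hbox
    rw [mem_coe, mem_product, mem_filter, mem_filter, mem_quadBox, mem_quadBox]
    refine ⟨⟨?_, (isCycle_iff_of_isFloorCycle hq hfc).not.mp hnc⟩, ?_, hfc⟩ <;>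
    · simp only [quadMap]
      omega
  · rintro ⟨r, u⟩ hp
    rw [mem_coe, mem_product, mem_filter, mem_filter] at hp
    obtain ⟨⟨hr, hr0⟩, hu, hu0⟩ := hp
    have hfc : isFloorCycle q (quadOfDigits r u) := by
      change altSum (quadMap (· / 2) _) % q = 0
      rwa [quadMap_div_two_quadOfDigits hr]
    rw [mem_coe, mem_filter, isCycle_iff_of_isFloorCycle hq hfc, quadMap_emod_two_quadOfDigits hr]
    exact ⟨quadOfDigits_mem_quadBox_two_mul hr hu, hr0, hfc⟩
  · rintro ⟨r, u⟩ hp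
    rw [mem_coe, mem_product, mem_filter] at hp
    exact Prod.ext (quadMap_emod_two_quadOfDigits hp.1.1) (quadMap_div_two_quadOfDigits hp.1.1)

theorem stmt_1 (q : ℕ) (hq : 2 < q) :
    ((expChains q).filter (fun x => ¬ isCycle q x ∧ isFloorCycle q x)).card = 10 * q ^ 3 ∧
    (((expChains q).filter (fun x => ¬ isCycle q x ∧ isFloorCycle q x)).card : ℚ) /
      (((expChains q).filter (fun x => ¬ isCycle q x)).card : ℚ) = 5 / (4 * (2 * q - 1)) := by
  have hcount := card_not_isCycle_and_isFloorCycle q (by omega)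
  have htoNat : (2 * (q : ℤ)).toNat = 2 * q := by omega
  have hcycle : #((expChains q).filter (isCycle q)) = (2 * q) ^ 3 := by
    rw [← htoNat]
    exact card_filter_altSum_emod_eq_zero (2 * q)
  have hall : #(expChains q) = (2 * q) ^ 4 := by
    rw [← htoNat]
    exact card_quadBox (2 * q)
  have hnot : (#((expChains q).filter fun x => ¬ isCycle q x) : ℚ) = (2 * q) ^ 4 - (2 * q) ^ 3 := by
    have hsplit := card_filter_add_card_filter_not (s := expChains q) (isCycle q)
    rw [hall, hcycle] at hsplit
    rw [eq_sub_iff_add_eq']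
    exact_mod_cast hsplit
  refine ⟨hcount, ?_⟩
  rw [hcount, hnot, show (2 * q : ℚ) ^ 4 - (2 * q) ^ 3 = 8 * q ^ 3 * (2 * q - 1) by ring]
  field_simp
  push_cast
  ring
end

section
/- Let q > 2 be a natural number. Among all quadruples (a,b,c,d) of integers with 0 ≤ a,b,c,d ≤ 2q−1, the number of quadruples satisfying a − b − c + d ≢ 0 (mod 2q) and (a mod q) − (b mod q) − (c mod q) + (d mod q) ≡ 0 (mod q) equals 8q³. Consequently, a uniformly random exponent chain that does not form a cycle for circulant size 2q forms a cycle after modulo lifting with probability 1/(2q−1). -/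
/-- The modulo-lifted chain (entries `e mod q`) forms a cycle for circulant size `q`. -/
abbrev isModCycle (q : ℕ) (x : ℤ × ℤ × ℤ × ℤ) : Prop :=
  (x.1 % q - x.2.1 % q - x.2.2.1 % q + x.2.2.2 % q) % q = 0

/-!
A chain with alternating sum `s = a - b - c + d` is a cycle mod `2q` iff `s ≡ 0`, and its
lifting is a cycle mod `q` iff `s ≡ 0 [ZMOD q]`, i.e. iff `s ≡ 0` or `s ≡ q [ZMOD 2q]`.
So the chains counted are exactly those with `s ≡ q [ZMOD 2q]`. For any residue `r`, once
`a, b, c` are chosen there is exactly one `d ∈ [0, 2q)` with `s ≡ r`, so every residue class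
of `s` contains `(2q)³` chains; in particular the non-cycles number `(2q)⁴ - (2q)³`.
-/

open Finset

def chainSum (x : ℤ × ℤ × ℤ × ℤ) : ℤ := x.1 - x.2.1 - x.2.2.1 + x.2.2.2

lemma isCycle_iff (q : ℕ) (x : ℤ × ℤ × ℤ × ℤ) :
    isCycle q x ↔ chainSum x ≡ 0 [ZMOD 2 * q] := by
  rw [Int.modEq_zero_iff_dvd, Int.dvd_iff_emod_eq_zero, chainSum]

lemma isModCycle_iff (q : ℕ) (x : ℤ × ℤ × ℤ × ℤ) :
    isModCycle q x ↔ chainSum x ≡ 0 [ZMOD q] := by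
  have hlift : x.1 % q - x.2.1 % q - x.2.2.1 % q + x.2.2.2 % q ≡ chainSum x [ZMOD q] :=
    (((Int.mod_modEq _ _).sub (Int.mod_modEq _ _)).sub (Int.mod_modEq _ _)).add
      (Int.mod_modEq _ _)
  rw [isModCycle, ← Int.dvd_iff_emod_eq_zero, ← Int.modEq_zero_iff_dvd]
  exact ⟨hlift.symm.trans, hlift.trans⟩

lemma not_modEq_zero_two_mul_and_modEq_zero_iff {q : ℤ} (hq : q ≠ 0) (s : ℤ) :
    (¬ s ≡ 0 [ZMOD 2 * q] ∧ s ≡ 0 [ZMOD q]) ↔ s ≡ q [ZMOD 2 * q] := by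
  rw [Int.modEq_zero_iff_dvd, Int.modEq_zero_iff_dvd, Int.modEq_iff_dvd]
  constructor
  · rintro ⟨hs, t, rfl⟩
    have ht : ¬ 2 ∣ t := fun ⟨u, hu⟩ ↦ hs ⟨u, by rw [hu]; ring⟩
    obtain ⟨u, hu⟩ : 2 ∣ 1 - t := by omega
    exact ⟨u, by linear_combination q * hu⟩
  · rintro ⟨u, hu⟩
    refine ⟨fun ⟨v, hv⟩ ↦ ?_, ⟨1 - 2 * u, by linear_combination -hu⟩⟩
    have : 2 * v = 1 - 2 * u := mul_left_cancel₀ hq (by linear_combination -hv - hu)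
    omega

lemma card_filter_add_modEq_eq_one {n : ℤ} (hn : 0 < n) (C r : ℤ) :
    #{d ∈ Icc 0 (n - 1) | C + d ≡ r [ZMOD n]} = 1 := by
  rw [card_eq_one]
  refine ⟨(r - C) % n, ?_⟩
  ext d
  simp only [mem_filter, mem_Icc, mem_singleton]
  constructor
  · rintro ⟨⟨hd0, hdn⟩, hd⟩
    rw [← Int.emod_eq_of_lt (b := n) hd0 (by omega)]
    exact Int.ModEq.add_left_cancel' C (by rwa [add_sub_cancel])
  · rintro rfl
    refine ⟨⟨Int.emod_nonneg _ hn.ne', by linarith [Int.emod_lt_of_pos (r - C) hn]⟩, ?_⟩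
    calc C + (r - C) % n ≡ C + (r - C) [ZMOD n] := (Int.mod_modEq _ _).add_left C
      _ = r := by ring

lemma card_filter_chainSum_modEq {n : ℤ} (hn : 0 < n) (r : ℤ) :
    (#{x ∈ Icc 0 (n - 1) ×ˢ Icc 0 (n - 1) ×ˢ Icc 0 (n - 1) ×ˢ Icc 0 (n - 1) |
      chainSum x ≡ r [ZMOD n]} : ℤ) = n ^ 3 := by
  have hd (a b c : ℤ) : #{d ∈ Icc 0 (n - 1) | chainSum (a, b, c, d) ≡ r [ZMOD n]} = 1 :=
    card_filter_add_modEq_eq_one hn (a - b - c) r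
  have hcount : #{x ∈ Icc 0 (n - 1) ×ˢ Icc 0 (n - 1) ×ˢ Icc 0 (n - 1) ×ˢ Icc 0 (n - 1) |
      chainSum x ≡ r [ZMOD n]} = #(Icc 0 (n - 1)) ^ 3 := by
    simp only [card_filter, sum_product] at hd ⊢
    simp only [hd, sum_const, smul_eq_mul, mul_one]
    ring
  rw [hcount, Int.card_Icc]
  push_cast
  rw [Int.toNat_of_nonneg (by omega)]
  ring

lemma card_expChains (q : ℕ) : #(expChains q) = (2 * q) ^ 4 := by
  simp only [card_product, Int.card_Icc]
  rw [show (2 * (q : ℤ) - 1 + 1 - 0).toNat = 2 * q by omega]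
  ring

theorem stmt_3 (q : ℕ) (hq : 2 < q) :
    ((expChains q).filter (fun x => ¬ isCycle q x ∧ isModCycle q x)).card = 8 * q ^ 3 ∧
    (((expChains q).filter (fun x => ¬ isCycle q x ∧ isModCycle q x)).card : ℚ) /
      (((expChains q).filter (fun x => ¬ isCycle q x)).card : ℚ) = 1 / (2 * q - 1) := by
  have hq2 : (0 : ℤ) < 2 * q := by omega
  have hlifted : #{x ∈ expChains q | ¬ isCycle q x ∧ isModCycle q x} = (2 * q) ^ 3 := by
    zify
    rw [← card_filter_chainSum_modEq hq2 q]
    congr 2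
    refine filter_congr fun x _ ↦ ?_
    rw [isCycle_iff, isModCycle_iff, not_modEq_zero_two_mul_and_modEq_zero_iff (by omega)]
  have hcycle : #{x ∈ expChains q | isCycle q x} = (2 * q) ^ 3 := by
    zify
    rw [← card_filter_chainSum_modEq hq2 0]
    congr 2
  have hsplit := card_filter_add_card_filter_not (s := expChains q) (isCycle q)
  rw [card_expChains, hcycle] at hsplit
  have hnot : (#{x ∈ expChains q | ¬ isCycle q x} : ℚ) = (2 * q) ^ 3 * (2 * q - 1) := by
    have hsplit' : ((2 * q) ^ 3 + #{x ∈ expChains q | ¬ isCycle q x} : ℚ) = (2 * q) ^ 4 := by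
      exact_mod_cast hsplit
    linear_combination hsplit'
  refine ⟨by rw [hlifted]; ring, ?_⟩
  rw [hlifted, hnot, ← div_div]
  push_cast
  rw [div_self (by positivity)]
end

section
/- Let q > 2 be a natural number, let S be the set of quadruples (a,b,c,d) of integers in {0,…,2q−1} with a − b − c + d ≡ 0 (mod 2q) and let T be the set of such quadruples with a − b − c + d ≢ 0 (mod 2q). For natural numbers x and y, consider the uniform distribution on Sˣ × Tʸ, and let N be the random variable counting the indices i (among the x + y coordinate quadruples) whose floor-lifted quadruple satisfies ⌊a/2⌋ − ⌊b/2⌋ − ⌊c/2⌋ + ⌊d/2⌋ ≡ 0 (mod q). Then the expectation of N equals (3/4)·x + (5/(4(2q−1)))·y. Equivalently, the sum of N over all elements of Sˣ × Tʸ equals ((3/4)x + (5/(4(2q−1)))y)·(8q³)ˣ·(8q³(2q−1))ʸ. -/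
/-! Fix `a, b, c`. The cycle condition pins `d` to a single residue mod `2q`, and the floor-lift
condition pins `⌊d/2⌋` to a single residue mod `q`, i.e. leaves two values of `d`; so there are
`8q³` cycles and `16q³` floor-lifted cycles among the `16q⁴` chains. For a cycle, halving loses
only the carry `(r_a + r_d - r_b - r_c)/2 ∈ {-1, 0, 1}` of the parities, so (as `q > 1`) its floor
lift is a cycle unless `b` and `c` share a parity that `a` lacks. That leaves 6 of the 8 parity
patterns of `(a, b, c)`, hence `6q³` of the cycles and `10q³` of the non-cycles lift to cycles.
Summing the coordinates of `Sˣ × Tʸ` separately gives `x · 6/8 + y · 10q³ / (8q³(2q - 1))`. -/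

open Finset

lemma Int.add_emod_eq_zero_iff_eq_neg_emod {m k d : ℤ} (hd₀ : 0 ≤ d) (hdm : d < m) :
    (k + d) % m = 0 ↔ d = (-k) % m := by
  rw [show k + d = d - -k by ring, ← Int.emod_eq_emod_iff_emod_sub_eq_zero,
    Int.emod_eq_of_lt hd₀ hdm]

lemma Int.filter_Icc_add_emod_eq_zero {m : ℤ} (hm : 0 < m) (k : ℤ) :
    (Icc 0 (m - 1)).filter (fun d => (k + d) % m = 0) = {(-k) % m} := by
  ext d
  have h₀ := Int.emod_nonneg (-k) hm.ne'
  have h₁ := Int.emod_lt_of_pos (-k) hm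
  simp only [mem_filter, mem_Icc, mem_singleton]
  constructor
  · rintro ⟨⟨hd₀, hd₁⟩, hd⟩
    exact (Int.add_emod_eq_zero_iff_eq_neg_emod hd₀ (by omega)).mp hd
  · rintro rfl
    exact ⟨⟨h₀, by omega⟩, (Int.add_emod_eq_zero_iff_eq_neg_emod h₀ h₁).mpr rfl⟩

lemma Int.card_filter_Icc_add_ediv_two_emod_eq_zero {q : ℤ} (hq : 0 < q) (k : ℤ) :
    #((Icc 0 (2 * q - 1)).filter (fun d => (k + d / 2) % q = 0)) = 2 := by
  set j := (-k) % q
  have h₀ : 0 ≤ j := Int.emod_nonneg (-k) hq.ne'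
  have h₁ : j < q := Int.emod_lt_of_pos (-k) hq
  have hfilter :
      (Icc 0 (2 * q - 1)).filter (fun d => (k + d / 2) % q = 0) = {2 * j, 2 * j + 1} := by
    ext d
    simp only [mem_filter, mem_Icc, mem_insert, mem_singleton]
    constructor
    · rintro ⟨⟨hd₀, hd₁⟩, hd⟩
      have := (Int.add_emod_eq_zero_iff_eq_neg_emod (by omega) (by omega)).mp hd
      omega
    · intro hd
      refine ⟨by omega, ?_⟩
      rw [Int.add_emod_eq_zero_iff_eq_neg_emod (by omega) (by omega)]
      omega
  rw [hfilter, card_pair (by omega)]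

lemma Int.sum_Icc_emod_two {M : Type*} [AddCommMonoid M] (q : ℕ) (g : ℤ → M) :
    ∑ b ∈ Icc (0 : ℤ) (2 * q - 1), g (b % 2) = q • ∑ r ∈ {0, 1}, g r := by
  have hsplit : ∑ b ∈ Icc (0 : ℤ) (2 * q - 1), g (b % 2) =
      ∑ p ∈ Ico (0 : ℤ) q ×ˢ {0, 1}, g p.2 := by
    refine sum_nbij' (fun b => (b / 2, b % 2)) (fun p => 2 * p.1 + p.2) ?_ ?_ ?_ ?_
      (fun _ _ => rfl) <;>
      simp only [mem_Icc, mem_product, mem_Ico, mem_insert, mem_singleton,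
        Prod.forall, Prod.mk.injEq] <;>
      omega
  rw [hsplit, sum_product_right, smul_sum]
  simp

lemma Int.sum_Icc_emod_two_three {M : Type*} [AddCommMonoid M] (q : ℕ) (g : ℤ → ℤ → ℤ → M) :
    ∑ a ∈ Icc (0 : ℤ) (2 * q - 1), ∑ b ∈ Icc (0 : ℤ) (2 * q - 1),
      ∑ c ∈ Icc (0 : ℤ) (2 * q - 1), g (a % 2) (b % 2) (c % 2) =
    q • ∑ ra ∈ {0, 1}, q • ∑ rb ∈ {0, 1}, q • ∑ rc ∈ {0, 1}, g ra rb rc := by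
  calc _ = ∑ a ∈ Icc (0 : ℤ) (2 * q - 1), ∑ b ∈ Icc (0 : ℤ) (2 * q - 1),
        q • ∑ rc ∈ {0, 1}, g (a % 2) (b % 2) rc := by
        simp only [Int.sum_Icc_emod_two q (g _ _)]
    _ = ∑ a ∈ Icc (0 : ℤ) (2 * q - 1),
        q • ∑ rb ∈ {0, 1}, q • ∑ rc ∈ {0, 1}, g (a % 2) rb rc :=
        sum_congr rfl fun a _ =>
          Int.sum_Icc_emod_two q fun rb => q • ∑ rc ∈ {0, 1}, g (a % 2) rb rc
    _ = _ :=
        Int.sum_Icc_emod_two q fun ra => q • ∑ rb ∈ {0, 1}, q • ∑ rc ∈ {0, 1}, g ra rb rc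

lemma card_Icc_two_mul_sub_one (q : ℕ) : #(Icc (0 : ℤ) (2 * q - 1)) = 2 * q := by
  simp only [Int.card_Icc]
  omega

lemma card_filter_expChains (q : ℕ) (P : ℤ × ℤ × ℤ × ℤ → Prop) [DecidablePred P] :
    #((expChains q).filter P) =
      ∑ a ∈ Icc (0 : ℤ) (2 * q - 1), ∑ b ∈ Icc (0 : ℤ) (2 * q - 1),
        ∑ c ∈ Icc (0 : ℤ) (2 * q - 1),
          #((Icc (0 : ℤ) (2 * q - 1)).filter fun d => P (a, b, c, d)) := by
  simp only [card_filter, sum_product]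

lemma filter_isCycle_eq_singleton {q : ℕ} (hq : 0 < q) (a b c : ℤ) :
    (Icc (0 : ℤ) (2 * q - 1)).filter (fun d => isCycle q (a, b, c, d)) =
      {(-(a - b - c)) % (2 * q)} :=
  Int.filter_Icc_add_emod_eq_zero (by positivity) (a - b - c)

lemma isFloorCycle_iff_of_isCycle {q : ℕ} (hq : 1 < q) {a b c d : ℤ}
    (h : isCycle q (a, b, c, d)) :
    isFloorCycle q (a, b, c, d) ↔ (b % 2 = c % 2 → a % 2 = b % 2) := by
  obtain ⟨t, ht⟩ : (2 * q : ℤ) ∣ a - b - c + d := Int.dvd_of_emod_eq_zero h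
  -- `e` is the carry lost by halving each entry.
  obtain ⟨e, he⟩ : ∃ e, e = (a % 2 + d % 2 - b % 2 - c % 2) / 2 := ⟨_, rfl⟩
  have hfloor : a / 2 - b / 2 - c / 2 + d / 2 = q * t - e := by
    rw [mul_assoc] at ht
    generalize (q : ℤ) * t = s at ht ⊢
    omega
  have he_zero : e = 0 ↔ (b % 2 = c % 2 → a % 2 = b % 2) := by
    have : (a - b - c + d) % 2 = 0 := by rw [ht, mul_assoc, Int.mul_emod_right]
    omega
  simp only [isFloorCycle, hfloor, ← Int.dvd_iff_emod_eq_zero, ← he_zero,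
    (dvd_sub_right (dvd_mul_right (q : ℤ) t) : _ ↔ (q : ℤ) ∣ e)]
  exact ⟨fun hqe => Int.eq_zero_of_abs_lt_dvd hqe (abs_lt.mpr ⟨by omega, by omega⟩),
    fun he => he ▸ dvd_zero _⟩

lemma card_filter_isCycle {q : ℕ} (hq : 0 < q) :
    #((expChains q).filter (isCycle q)) = 8 * q ^ 3 := by
  simp only [card_filter_expChains, filter_isCycle_eq_singleton hq, card_singleton, sum_const,
    card_Icc_two_mul_sub_one, smul_eq_mul]
  ring

lemma card_filter_isFloorCycle {q : ℕ} (hq : 0 < q) :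
    #((expChains q).filter (isFloorCycle q)) = 16 * q ^ 3 := by
  simp only [card_filter_expChains, isFloorCycle,
    Int.card_filter_Icc_add_ediv_two_emod_eq_zero (Int.natCast_pos.mpr hq), sum_const,
    card_Icc_two_mul_sub_one, smul_eq_mul]
  ring

lemma card_filter_isCycle_filter_isFloorCycle {q : ℕ} (hq : 1 < q) :
    #(((expChains q).filter (isCycle q)).filter (isFloorCycle q)) = 6 * q ^ 3 := by
  have hfiber (a b c : ℤ) :
      #((Icc (0 : ℤ) (2 * q - 1)).filter
          fun d => isCycle q (a, b, c, d) ∧ isFloorCycle q (a, b, c, d)) =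
        if b % 2 = c % 2 → a % 2 = b % 2 then 1 else 0 := by
    rw [filter_congr fun d _ => and_congr_right (isFloorCycle_iff_of_isCycle hq),
      ← filter_filter, filter_isCycle_eq_singleton (by omega), filter_singleton]
    split_ifs <;> rfl
  rw [filter_filter, card_filter_expChains]
  simp only [hfiber,
    Int.sum_Icc_emod_two_three q fun ra rb rc => if rb = rc → ra = rb then 1 else 0]
  simp only [sum_pair (zero_ne_one' ℤ)]
  norm_num
  ring

lemma card_filter_not_isCycle {q : ℕ} (hq : 0 < q) :
    #((expChains q).filter fun v => ¬ isCycle q v) = 8 * q ^ 3 * (2 * q - 1) := by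
  have h := card_filter_add_card_filter_not (s := expChains q) (p := isCycle q)
  simp only [card_filter_isCycle hq, card_product, card_Icc_two_mul_sub_one] at h
  have hcard : 2 * q * (2 * q * (2 * q * (2 * q))) = 8 * q ^ 3 * (2 * q) := by ring
  rw [Nat.mul_sub_one]
  omega

lemma card_filter_not_isCycle_filter_isFloorCycle {q : ℕ} (hq : 1 < q) :
    #(((expChains q).filter fun v => ¬ isCycle q v).filter (isFloorCycle q)) = 10 * q ^ 3 := by
  have h := card_filter_add_card_filter_not
    (s := (expChains q).filter (isFloorCycle q)) (p := isCycle q)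
  rw [filter_comm, card_filter_isCycle_filter_isFloorCycle hq, card_filter_isFloorCycle (by omega),
    filter_comm] at h
  omega

lemma Fintype.sum_piFinset_card_filter {ι α K : Type*} [Fintype ι] [DecidableEq ι] [Field K]
    [CharZero K] (S : Finset α) (P : α → Prop) [DecidablePred P] :
    ∑ f ∈ piFinset (fun _ : ι => S), (#{i | P (f i)} : K) =
      Fintype.card ι * (#(S.filter P) / #S) * #S ^ Fintype.card ι := by
  have hsum : ∑ f ∈ piFinset (fun _ : ι => S), (#{i | P (f i)} : K) =
      Fintype.card ι * (#S ^ (Fintype.card ι - 1) * #(S.filter P)) := by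
    simp only [card_filter, Nat.cast_sum, Nat.cast_ite, Nat.cast_one, Nat.cast_zero]
    rw [sum_comm]
    simp only [Fintype.sum_piFinset_apply (fun v => if P v then (1 : K) else 0)]
    simp [sum_boole]
  rw [hsum]
  obtain hι | hι := Nat.eq_zero_or_pos (Fintype.card ι)
  · simp [hι]
  obtain ⟨n, hn⟩ := Nat.exists_eq_add_one_of_ne_zero hι.ne'
  obtain hS | hS := eq_or_ne (#S : K) 0
  · simp [Finset.card_eq_zero.mp (Nat.cast_eq_zero.mp hS), hn]
  · rw [hn, Nat.add_sub_cancel, pow_succ]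
    field_simp

/-- Expected number of 4-cycles after floor lifting: over the uniform distribution on
`Sˣ × Tʸ` (where `S` = chains forming a cycle, `T` = chains not forming a cycle),
the sum of the number `N` of coordinates whose floor lift forms a cycle equals
`((3/4)x + (5/(4(2q-1)))y) · |S|ˣ · |T|ʸ` with `|S| = 8q³`, `|T| = 8q³(2q-1)`. -/
theorem stmt_4 (q : ℕ) (hq : 2 < q) (x y : ℕ) :
    ∑ f ∈ Fintype.piFinset
        (fun _ : Fin x => (expChains q).filter (fun v => isCycle q v)),
      ∑ g ∈ Fintype.piFinset
          (fun _ : Fin y => (expChains q).filter (fun v => ¬ isCycle q v)),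
        (((Finset.univ.filter (fun i : Fin x => isFloorCycle q (f i))).card +
          (Finset.univ.filter (fun j : Fin y => isFloorCycle q (g j))).card : ℕ) : ℚ) =
      ((3 / 4) * x + (5 / (4 * (2 * q - 1))) * y) *
        (8 * q ^ 3 : ℚ) ^ x * (8 * q ^ 3 * (2 * q - 1) : ℚ) ^ y := by
  have hq₀ : 0 < q := by omega
  have hq₁ : 1 < q := by omega
  have hq' : (2 * q - 1 : ℚ) ≠ 0 := by
    have : (3 : ℚ) ≤ q := by exact_mod_cast hq
    linarith
  simp only [Nat.cast_add, sum_add_distrib, sum_const, nsmul_eq_mul, ← mul_sum,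
    Fintype.sum_piFinset_card_filter _ (isFloorCycle q), Fintype.card_piFinset_const,
    Fintype.card_fin, Nat.cast_pow, card_filter_isCycle hq₀, card_filter_not_isCycle hq₀,
    card_filter_isCycle_filter_isFloorCycle hq₁, card_filter_not_isCycle_filter_isFloorCycle hq₁]
  push_cast [Nat.cast_sub (by omega : 1 ≤ 2 * q)]
  field_simp
  ring
end

section
/- Let q be a positive integer, let r = 2t + 1 be an odd positive integer, and let a be an integer with 0 ≤ a ≤ 2q−1; write a = 2a₁ + a₂ with a₂ ∈ {0,1}. Then ⌊((r·a) mod 2q)/2⌋ ≡ a₁·r + a₂·t (mod q). -/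
/-- Floor scale modulo lifting of a single entry: for `q ≥ 1`, an odd positive scale
value `r = 2t + 1`, and an entry `a ∈ {0,…,2q-1}` written as `a = 2a₁ + a₂` with
`a₂ ∈ {0,1}`, one has `⌊((r·a) mod 2q)/2⌋ ≡ a₁·r + a₂·t (mod q)`. -/
theorem stmt_7 (q : ℕ) (hq : 0 < q) (t r : ℤ) (hr : r = 2 * t + 1) (hrpos : 0 < r)
    (a a₁ a₂ : ℤ) (ha : 0 ≤ a) (ha' : a ≤ 2 * q - 1)
    (hsplit : a = 2 * a₁ + a₂) (ha₂ : a₂ = 0 ∨ a₂ = 1) :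
    (r * a % (2 * q)) / 2 ≡ a₁ * r + a₂ * t [ZMOD q] := by
  set k := r * a / (2 * q) with hkdef
  have hk : r * a % (2 * q) = r * a - 2 * q * k := by
    rw [hkdef, Int.emod_def]
  have h2 : r * a % (2 * q) = 2 * (a₁ * r + a₂ * t - q * k) + a₂ := by
    rw [hk, hr, hsplit]; ring
  have h3 : (r * a % (2 * q)) / 2 = a₁ * r + a₂ * t - q * k := by
    rcases ha₂ with h | h <;> omega
  rw [h3]
  exact Int.ModEq.symm (Int.modEq_iff_dvd.mpr ⟨-k, by ring⟩)
end

section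
/- Let q > 2 be a natural number and let r be an integer with 0 < r < 2q and gcd(r, 2q) = 1. For every quadruple (a,b,c,d) of integers with 0 ≤ a,b,c,d ≤ 2q−1 satisfying a − b − c + d ≡ 0 (mod 2q), the floor-scale-modulo-lifted chain with scale r forms a cycle if and only if the floor-lifted chain forms a cycle; that is, ⌊((ra) mod 2q)/2⌋ − ⌊((rb) mod 2q)/2⌋ − ⌊((rc) mod 2q)/2⌋ + ⌊((rd) mod 2q)/2⌋ ≡ 0 (mod q) if and only if ⌊a/2⌋ − ⌊b/2⌋ − ⌊c/2⌋ + ⌊d/2⌋ ≡ 0 (mod q). -/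
/-- The floor-scale-modulo lift of entry `e` to circulant size `q` with scale `r`:
`⌊((r·e) mod 2q)/2⌋`. -/
def fsmLift (q : ℕ) (r e : ℤ) : ℤ := (r * e % (2 * q)) / 2

/-- Key lemma: if the alternating sum is divisible by 2q, the floor-halved
alternating sum is divisible by q iff the parity alternating sum vanishes. -/
lemma key (q : ℕ) (hq : 2 < q) (x y z w : ℤ) (h : (2 * (q:ℤ)) ∣ (x - y - z + w)) :
    ((x / 2 - y / 2 - z / 2 + w / 2) % q = 0 ↔ x % 2 - y % 2 - z % 2 + w % 2 = 0) := by
  obtain ⟨k, hk⟩ := h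
  set m : ℤ := (q:ℤ) * k with hm
  have hk' : x - y - z + w = 2 * m := by rw [hm]; linarith [hk]
  have hx := Int.emod_add_mul_ediv x 2
  have hy := Int.emod_add_mul_ediv y 2
  have hz := Int.emod_add_mul_ediv z 2
  have hw := Int.emod_add_mul_ediv w 2
  have hx2 := Int.emod_two_eq x
  have hy2 := Int.emod_two_eq y
  have hz2 := Int.emod_two_eq z
  have hw2 := Int.emod_two_eq w
  -- parity sum p ∈ {-2, 0, 2} and floorsum = m - p/2
  have hfs : x / 2 - y / 2 - z / 2 + w / 2 = m - (x % 2 - y % 2 - z % 2 + w % 2) / 2 := by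
    omega
  have hp : x % 2 - y % 2 - z % 2 + w % 2 = -2 ∨ x % 2 - y % 2 - z % 2 + w % 2 = 0 ∨
      x % 2 - y % 2 - z % 2 + w % 2 = 2 := by omega
  rw [hfs]
  have hqdvd : (q:ℤ) ∣ m := ⟨k, hm⟩
  rcases hp with hp | hp | hp
  · rw [hp]
    norm_num
    intro hcon
    have : (q:ℤ) ∣ 1 := by
      have := dvd_sub hcon hqdvd
      simpa using this
    have := Int.le_of_dvd one_pos this
    omega
  · rw [hp]
    norm_num
    exact hqdvd
  · rw [hp]
    norm_num
    intro hcon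
    have : (q:ℤ) ∣ 1 := by
      have := dvd_sub hqdvd hcon
      simpa using this
    have := Int.le_of_dvd one_pos this
    omega

/-- For a scale value `r` with `0 < r < 2q`, `gcd(r,2q) = 1`, and an exponent chain
`(a,b,c,d)`, `0 ≤ a,b,c,d ≤ 2q-1`, forming a cycle for circulant size `2q`, the
floor-scale-modulo-lifted chain forms a cycle for circulant size `q` if and only if
the floor-lifted chain (entries `⌊e/2⌋`) does. -/
theorem stmt_8 (q : ℕ) (hq : 2 < q) (r : ℤ) (hr0 : 0 < r) (hr1 : r < 2 * q)
    (hrcop : Int.gcd r (2 * q) = 1)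
    (a b c d : ℤ) (ha : 0 ≤ a) (ha' : a ≤ 2 * q - 1) (hb : 0 ≤ b) (hb' : b ≤ 2 * q - 1)
    (hc : 0 ≤ c) (hc' : c ≤ 2 * q - 1) (hd : 0 ≤ d) (hd' : d ≤ 2 * q - 1)
    (hcyc : (a - b - c + d) % (2 * q) = 0) :
    (fsmLift q r a - fsmLift q r b - fsmLift q r c + fsmLift q r d) % q = 0 ↔
      (a / 2 - b / 2 - c / 2 + d / 2) % q = 0 := by
  have hqpos : (0:ℤ) < 2 * q := by positivity
  -- r is odd
  have hrodd : r % 2 = 1 := by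
    rcases Int.emod_two_eq r with h | h
    · exfalso
      have h2r : (2:ℤ) ∣ r := Int.dvd_of_emod_eq_zero h
      have h2q : (2:ℤ) ∣ 2 * q := ⟨q, rfl⟩
      have := Int.dvd_gcd h2r h2q
      rw [hrcop] at this
      norm_num at this
    · exact h
  set a' : ℤ := r * a % (2 * q) with ha'd
  set b' : ℤ := r * b % (2 * q) with hb'd
  set c' : ℤ := r * c % (2 * q) with hc'd
  set d' : ℤ := r * d % (2 * q) with hd'd
  -- parity preserved
  have par : ∀ e : ℤ, (r * e % (2 * q)) % 2 = e % 2 := by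
    intro e
    have h2 : (2:ℤ) ∣ 2 * q := ⟨q, rfl⟩
    rw [Int.emod_emod_of_dvd _ h2, Int.mul_emod, hrodd, one_mul, Int.emod_emod_of_dvd]
    exact dvd_refl 2
  -- lifted cycle divisibility
  have hdvd' : (2 * (q:ℤ)) ∣ (a' - b' - c' + d') := by
    apply Int.dvd_of_emod_eq_zero
    have Ha : Int.ModEq (2 * q) a' (r * a) := Int.emod_emod_of_dvd _ (dvd_refl _)
    have Hb : Int.ModEq (2 * q) b' (r * b) := Int.emod_emod_of_dvd _ (dvd_refl _)
    have Hc : Int.ModEq (2 * q) c' (r * c) := Int.emod_emod_of_dvd _ (dvd_refl _)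
    have Hd : Int.ModEq (2 * q) d' (r * d) := Int.emod_emod_of_dvd _ (dvd_refl _)
    have e1 : (a' - b' - c' + d') % (2 * q) = (r * a - r * b - r * c + r * d) % (2 * q) :=
      ((Ha.sub Hb).sub Hc).add Hd
    rw [e1, show r * a - r * b - r * c + r * d = r * (a - b - c + d) by ring,
      Int.mul_emod, hcyc, mul_zero, Int.zero_emod]
  have hdvd : (2 * (q:ℤ)) ∣ (a - b - c + d) := Int.dvd_of_emod_eq_zero hcyc
  have k1 := key q hq a' b' c' d' hdvd'
  have k2 := key q hq a b c d hdvd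
  have hfsm : fsmLift q r a - fsmLift q r b - fsmLift q r c + fsmLift q r d =
      a' / 2 - b' / 2 - c' / 2 + d' / 2 := rfl
  rw [hfsm, k1, k2, ha'd, hb'd, hc'd, hd'd, par a, par b, par c, par d]
end

section
/- Let q > 2 be a natural number and let r₁, r₂ be two distinct integers with 0 < r₁, r₂ < 2q, gcd(r₁, 2q) = 1, gcd(r₂, 2q) = 1 and r₁ ≢ r₂(q+1) (mod 2q). Then for every quadruple (a,b,c,d) of integers with 0 ≤ a,b,c,d ≤ 2q−1: if both ⌊((r₁a) mod 2q)/2⌋ − ⌊((r₁b) mod 2q)/2⌋ − ⌊((r₁c) mod 2q)/2⌋ + ⌊((r₁d) mod 2q)/2⌋ ≡ 0 (mod q) and ⌊((r₂a) mod 2q)/2⌋ − ⌊((r₂b) mod 2q)/2⌋ − ⌊((r₂c) mod 2q)/2⌋ + ⌊((r₂d) mod 2q)/2⌋ ≡ 0 (mod q), then a − b − c + d ≡ 0 (mod 2q). In other words, if a chain does not form a cycle for circulant size 2q, then at least one of its two lifted chains with scales r₁ and r₂ does not form a cycle for circulant size q. -/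
private lemma aux_unit (n r₁ r₂ s δ : ℤ) (hδ : δ = 1 ∨ δ = -1)
    (h₁ : n ∣ r₁ * s - δ) (h₂ : n ∣ r₂ * s - δ) : n ∣ r₁ - r₂ := by
  obtain ⟨k, hk⟩ := h₁
  have hcop : IsCoprime n s := by
    rcases hδ with h | h <;> subst h
    · exact ⟨-k, r₁, by linear_combination hk⟩
    · exact ⟨k, -r₁, by linear_combination -hk⟩
  have hd : n ∣ (r₁ - r₂) * s := by
    have h := dvd_sub ⟨k, hk⟩ h₂
    have e : (r₁ * s - δ) - (r₂ * s - δ) = (r₁ - r₂) * s := by ring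
    rwa [e] at h
  exact hcop.dvd_of_dvd_mul_right hd

private lemma lift2 (q : ℕ) (r e : ℤ) (hr : r % 2 = 1) :
    2 * fsmLift q r e = r * e % (2 * q) - e % 2 := by
  unfold fsmLift
  have h1 : (r * e % (2 * (q:ℤ))) % 2 = (r * e) % 2 :=
    Int.emod_emod_of_dvd _ ⟨(q:ℤ), by ring⟩
  have h2 : (r * e) % 2 = e % 2 := by
    rw [Int.mul_emod, hr, one_mul, Int.emod_emod_of_dvd _ dvd_rfl]
  set X := r * e % (2 * (q:ℤ)) with hX
  omega


/-- Proposition on two scale values: if `r₁ ≠ r₂`, `0 < r₁, r₂ < 2q`, both coprime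
with `2q`, and `r₁ ≢ r₂(q+1) (mod 2q)`, then whenever the floor-scale-modulo-lifted
chains with both scales form cycles for circulant size `q`, the original chain forms a
cycle for circulant size `2q`.  Equivalently, if a chain does not form a cycle, at
least one of its two lifted chains does not form a cycle. -/
theorem stmt_10 (q : ℕ) (hq : 2 < q) (r₁ r₂ : ℤ) (hne : r₁ ≠ r₂)
    (hr₁0 : 0 < r₁) (hr₁1 : r₁ < 2 * q) (hr₂0 : 0 < r₂) (hr₂1 : r₂ < 2 * q)
    (hcop₁ : Int.gcd r₁ (2 * q) = 1) (hcop₂ : Int.gcd r₂ (2 * q) = 1)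
    (hmod : ¬ r₁ ≡ r₂ * (q + 1) [ZMOD (2 * q)])
    (a b c d : ℤ) (ha : 0 ≤ a) (ha' : a ≤ 2 * q - 1) (hb : 0 ≤ b) (hb' : b ≤ 2 * q - 1)
    (hc : 0 ≤ c) (hc' : c ≤ 2 * q - 1) (hd : 0 ≤ d) (hd' : d ≤ 2 * q - 1)
    (h₁ : (fsmLift q r₁ a - fsmLift q r₁ b - fsmLift q r₁ c + fsmLift q r₁ d) % q = 0)
    (h₂ : (fsmLift q r₂ a - fsmLift q r₂ b - fsmLift q r₂ c + fsmLift q r₂ d) % q = 0) :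
    (a - b - c + d) % (2 * q) = 0 := by
  have hq0 : (0:ℤ) < (q:ℤ) := by exact_mod_cast Nat.zero_lt_of_lt hq
  -- oddness of r₁ r₂
  have hodd : ∀ r : ℤ, Int.gcd r (2 * q) = 1 → r % 2 = 1 := by
    intro r hcop
    have h2 : ¬ (2:ℤ) ∣ r := by
      intro h
      have hd2 : (2:ℤ) ∣ (2 * (q:ℤ)) := ⟨(q:ℤ), rfl⟩
      have := Int.dvd_gcd h hd2
      rw [hcop] at this
      norm_num at this
    omega
  have hodd₁ := hodd r₁ hcop₁
  have hodd₂ := hodd r₂ hcop₂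
  -- key reduction
  have key : ∀ r : ℤ, r % 2 = 1 →
      (fsmLift q r a - fsmLift q r b - fsmLift q r c + fsmLift q r d) % q = 0 →
      (2 * (q:ℤ)) ∣ r * (a - b - c + d) - (a % 2 - b % 2 - c % 2 + d % 2) := by
    intro r hr h
    obtain ⟨m, hm⟩ := Int.dvd_of_emod_eq_zero h
    have la := lift2 q r a hr
    have lb := lift2 q r b hr
    have lc := lift2 q r c hr
    have ld := lift2 q r d hr
    have me : ∀ e : ℤ, ∃ k, r * e - r * e % (2 * (q:ℤ)) = 2 * (q:ℤ) * k := by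
      intro e
      exact ⟨r * e / (2 * (q:ℤ)), by rw [Int.emod_def]; ring⟩
    obtain ⟨ka, hka⟩ := me a
    obtain ⟨kb, hkb⟩ := me b
    obtain ⟨kc, hkc⟩ := me c
    obtain ⟨kd, hkd⟩ := me d
    exact ⟨m + ka - kb - kc + kd,
      by linear_combination hka - hkb - hkc + hkd - la + lb + lc - ld + 2 * hm⟩
  have H₁ := key r₁ hodd₁ h₁
  have H₂ := key r₂ hodd₂ h₂
  have hε : a % 2 - b % 2 - c % 2 + d % 2 = -2 ∨ a % 2 - b % 2 - c % 2 + d % 2 = -1 ∨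
      a % 2 - b % 2 - c % 2 + d % 2 = 0 ∨ a % 2 - b % 2 - c % 2 + d % 2 = 1 ∨
      a % 2 - b % 2 - c % 2 + d % 2 = 2 := by omega
  -- handle case q ∣ r₁ - r₂ (from ε = ±2) : contradiction with hmod
  have qcase : ¬ ((q:ℤ) ∣ r₁ - r₂) := by
    rintro ⟨k, hk⟩
    have hk1 : k < 2 := by nlinarith
    have hk2 : -2 < k := by nlinarith
    have hk3 : k ≠ 0 := by
      rintro rfl
      rw [mul_zero] at hk
      exact hne (by omega)
    obtain ⟨m2, hm2⟩ : ∃ m2, r₂ = 2 * m2 + 1 := ⟨r₂ / 2, by omega⟩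
    apply hmod
    rw [Int.modEq_iff_dvd]
    have hk' : k = 1 ∨ k = -1 := by omega
    rcases hk' with h | h <;> subst h
    · exact ⟨m2, by linear_combination (q:ℤ) * hm2 - hk⟩
    · exact ⟨m2 + 1, by linear_combination (q:ℤ) * hm2 - hk⟩
  -- handle case 2q ∣ r₁ - r₂ (from ε = ±1) : contradiction with hne
  have ncase : ¬ ((2 * (q:ℤ)) ∣ r₁ - r₂) := by
    intro h
    have := Int.eq_zero_of_abs_lt_dvd h (by rw [abs_lt]; omega)
    exact hne (by omega)
  rcases hε with h | h | h | h | h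
  · -- ε = -2 : show s even, reduce mod q
    exfalso
    rw [h] at H₁ H₂
    have h2 : (2:ℤ) ∣ r₁ * (a - b - c + d) := by
      obtain ⟨k, hk⟩ : (2:ℤ) ∣ r₁ * (a - b - c + d) - (-2) :=
        dvd_trans ⟨(q:ℤ), rfl⟩ H₁
      exact ⟨k - 1, by linarith⟩
    rcases Int.prime_two.dvd_mul.mp h2 with h' | h'
    · omega
    · obtain ⟨t, hst⟩ := h'
      have G : ∀ r : ℤ, (2 * (q:ℤ)) ∣ r * (a - b - c + d) - (-2) → (q:ℤ) ∣ r * t - (-1) := by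
        intro r hr
        obtain ⟨k, hk⟩ := hr
        exact ⟨k, by have : (2:ℤ) * (r * t - (-1)) = 2 * ((q:ℤ) * k) := by
                       linear_combination hk - r * hst
                     linarith [mul_left_cancel₀ (two_ne_zero (α := ℤ)) this]⟩
      exact qcase (aux_unit (q:ℤ) r₁ r₂ t (-1) (Or.inr rfl) (G r₁ H₁) (G r₂ H₂))
  · -- ε = -1
    exfalso
    rw [h] at H₁ H₂
    exact ncase (aux_unit (2 * (q:ℤ)) r₁ r₂ (a - b - c + d) (-1) (Or.inr rfl) H₁ H₂)
  · -- ε = 0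
    rw [h, sub_zero] at H₁
    have hc1 : IsCoprime (2 * (q:ℤ)) r₁ :=
      (Int.isCoprime_iff_gcd_eq_one.mpr hcop₁).symm
    have hdv : (2 * (q:ℤ)) ∣ (a - b - c + d) := hc1.dvd_of_dvd_mul_left H₁
    exact Int.emod_eq_zero_of_dvd hdv
  · -- ε = 1
    exfalso
    rw [h] at H₁ H₂
    exact ncase (aux_unit (2 * (q:ℤ)) r₁ r₂ (a - b - c + d) 1 (Or.inl rfl) H₁ H₂)
  · -- ε = 2
    exfalso
    rw [h] at H₁ H₂
    have h2 : (2:ℤ) ∣ r₁ * (a - b - c + d) := by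
      obtain ⟨k, hk⟩ : (2:ℤ) ∣ r₁ * (a - b - c + d) - 2 :=
        dvd_trans ⟨(q:ℤ), rfl⟩ H₁
      exact ⟨k + 1, by linarith⟩
    rcases Int.prime_two.dvd_mul.mp h2 with h' | h'
    · omega
    · obtain ⟨t, hst⟩ := h'
      have G : ∀ r : ℤ, (2 * (q:ℤ)) ∣ r * (a - b - c + d) - 2 → (q:ℤ) ∣ r * t - 1 := by
        intro r hr
        obtain ⟨k, hk⟩ := hr
        exact ⟨k, by have : (2:ℤ) * (r * t - 1) = 2 * ((q:ℤ) * k) := by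
                       linear_combination hk - r * hst
                     linarith [mul_left_cancel₀ (two_ne_zero (α := ℤ)) this]⟩
      exact qcase (aux_unit (q:ℤ) r₁ r₂ t 1 (Or.inl rfl) (G r₁ H₁) (G r₂ H₂))
end

section
/- Let q > 2 be an even natural number. Then there exists a set R of integers with R ⊆ {1,…,2q−1}, every element of R coprime with 2q, |R| = φ(2q)/2, and such that for all distinct r₁, r₂ ∈ R one has r₁ ≢ r₂(q+1) (mod 2q). -/
/-- For even `q > 2` there exists a set `R ⊆ {1,…,2q-1}` of scale values coprime with
`2q`, of cardinality `φ(2q)/2`, such that any two distinct `r₁, r₂ ∈ R` satisfy the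
admissibility condition `r₁ ≢ r₂(q+1) (mod 2q)` of the two-scale proposition. -/
theorem stmt_12 (q : ℕ) (hq : 2 < q) (heven : Even q) :
    ∃ R : Finset ℤ, R ⊆ Finset.Icc (1 : ℤ) (2 * q - 1) ∧
      (∀ r ∈ R, Int.gcd r (2 * q) = 1) ∧ R.card = Nat.totient (2 * q) / 2 ∧
      ∀ r₁ ∈ R, ∀ r₂ ∈ R, r₁ ≠ r₂ → ¬ r₁ ≡ r₂ * (q + 1) [ZMOD (2 * q)] := by
  obtain ⟨m, hm⟩ := heven
  have hq2 : q = 2 * m := by omega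
  set S : Finset ℕ := (Finset.range q).filter (fun r => Nat.Coprime (2*q) r) with hS
  have hmemS : ∀ r, r ∈ S ↔ r < q ∧ Nat.Coprime (2*q) r := by
    intro r; simp [hS]
  have hpos : ∀ r ∈ S, 1 ≤ r := by
    intro r hr
    rcases (hmemS r).1 hr with ⟨_, hc⟩
    by_contra h0
    have hr0 : r = 0 := by omega
    subst hr0
    rw [Nat.coprime_zero_right] at hc
    omega
  have hshift : ∀ r, Nat.Coprime (2*q) (r + q) ↔ Nat.Coprime (2*q) r := by
    intro r
    rw [Nat.coprime_mul_iff_left, Nat.coprime_mul_iff_left,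
        Nat.coprime_add_self_right]
    constructor <;> rintro ⟨h1, h2⟩ <;> refine ⟨?_, h2⟩
    · rwa [hq2, Nat.coprime_add_mul_left_right] at h1
    · rwa [hq2, Nat.coprime_add_mul_left_right]
  -- cardinality
  have hsplit : (Finset.range (2*q)).filter (fun r => Nat.Coprime (2*q) r) =
      S ∪ S.image (· + q) := by
    ext r
    simp only [Finset.mem_filter, Finset.mem_range, Finset.mem_union,
      Finset.mem_image, hmemS]
    constructor
    · rintro ⟨hr, hc⟩
      by_cases h : r < q
      · exact Or.inl ⟨h, hc⟩
      · refine Or.inr ⟨r - q, ⟨⟨by omega, ?_⟩, by omega⟩⟩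
        rw [← hshift]
        have : r - q + q = r := by omega
        rwa [this]
    · rintro (⟨h1, h2⟩ | ⟨s, ⟨⟨h1, h2⟩, rfl⟩⟩)
      · exact ⟨by omega, h2⟩
      · exact ⟨by omega, (hshift s).2 h2⟩
  have hdisj : Disjoint S (S.image (· + q)) := by
    rw [Finset.disjoint_left]
    rintro r hr hr'
    rcases Finset.mem_image.1 hr' with ⟨s, hs, rfl⟩
    have h1 := ((hmemS _).1 hr).1
    have h2 := hpos s hs
    omega
  have hinj : Function.Injective (· + q) := fun a b h => by simpa using h
  have hScard : Nat.totient (2*q) = 2 * S.card := by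
    rw [Nat.totient_eq_card_coprime, show {a ∈ Finset.range (2*q) | (2*q).Coprime a}
        = (Finset.range (2*q)).filter (fun r => Nat.Coprime (2*q) r) from rfl,
      hsplit, Finset.card_union_of_disjoint hdisj,
      Finset.card_image_of_injective _ hinj]
    omega
  refine ⟨S.image (fun r : ℕ => (r : ℤ)), ?_, ?_, ?_, ?_⟩
  · intro x hx
    rcases Finset.mem_image.1 hx with ⟨r, hr, rfl⟩
    have h1 := hpos r hr
    have h2 := ((hmemS r).1 hr).1
    simp only [Finset.mem_Icc]
    constructor
    · exact_mod_cast h1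
    · have hrq : (r : ℤ) < (q : ℤ) := by exact_mod_cast h2
      have hq' : (3 : ℤ) ≤ (q : ℤ) := by exact_mod_cast hq
      omega
  · intro x hx
    rcases Finset.mem_image.1 hx with ⟨r, hr, rfl⟩
    have hc := ((hmemS r).1 hr).2
    have : Int.gcd (r : ℤ) ((2 * q : ℕ) : ℤ) = Nat.gcd r (2 * q) := by
      exact Int.gcd_natCast_natCast r (2 * q)
    rw [show (2 * (q:ℤ)) = ((2 * q : ℕ) : ℤ) by push_cast; ring, this]
    exact Nat.coprime_comm.1 hc
  · rw [Finset.card_image_of_injective _ (fun a b h => by exact_mod_cast h), hScard]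
    omega
  · rintro r₁ hr₁ r₂ hr₂ hne h
    rcases Finset.mem_image.1 hr₁ with ⟨a, ha, rfl⟩
    rcases Finset.mem_image.1 hr₂ with ⟨b, hb, rfl⟩
    have ha1 := hpos a ha
    have ha2 := ((hmemS a).1 ha).1
    have hb1 := hpos b hb
    have hb2 := ((hmemS b).1 hb).1
    have hbc := ((hmemS b).1 hb).2
    -- b is odd
    have hbodd : Odd b := by
      rcases Nat.coprime_mul_iff_left.1 hbc with ⟨h2, _⟩
      rcases Nat.even_or_odd b with he | ho
      · exfalso
        rcases he with ⟨k, hk⟩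
        have : (2 : ℕ) ∣ Nat.gcd 2 b := Nat.dvd_gcd dvd_rfl ⟨k, by omega⟩
        rw [h2] at this; omega
      · exact ho
    obtain ⟨k, hk⟩ := hbodd
    -- from the congruence derive divisibility
    have hdvd1 : (2 * (q:ℤ)) ∣ ((b:ℤ) * (q + 1) - a) := Int.ModEq.dvd h
    have hdvd2 : (2 * (q:ℤ)) ∣ ((b:ℤ) * (q + 1) - ((b:ℤ) + q)) := by
      refine ⟨(k : ℤ), ?_⟩
      have : (b : ℤ) = 2 * k + 1 := by exact_mod_cast hk
      rw [this]; ring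
    have hdvd : (2 * (q:ℤ)) ∣ (((b:ℤ) + q) - a) := by
      have := dvd_sub hdvd1 hdvd2
      simpa using this
    have haq : (a : ℤ) < q := by exact_mod_cast ha2
    have hbq : (b : ℤ) < q := by exact_mod_cast hb2
    have ha1' : (1 : ℤ) ≤ a := by exact_mod_cast ha1
    have hb1' : (1 : ℤ) ≤ b := by exact_mod_cast hb1
    have hz := Int.eq_zero_of_abs_lt_dvd hdvd (by rw [abs_lt]; constructor <;> omega)
    omega
end

section
/- Let n be an even natural number. Then Σ_{k=0}^{n} min(k, n−k)·C(n,k) = (n/2)·(2ⁿ − C(n, n/2)). Equivalently, if Y is a binomial random variable with parameters n and 1/2, then E[min(Y, n−Y)] = (n/2)·(1 − C(n, n/2)/2ⁿ). -/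
open Finset

lemma sum_k_choose (n : ℕ) :
    2 * ∑ k ∈ range (n + 1), (k : ℤ) * n.choose k = n * 2 ^ n := by
  have h1 : ∑ k ∈ range (n + 1), (k : ℤ) * n.choose k
      = ∑ k ∈ range (n + 1), ((n : ℤ) - k) * n.choose k := by
    rw [← Finset.sum_range_reflect (fun k => (k : ℤ) * n.choose k) (n + 1)]
    apply Finset.sum_congr rfl
    intro k hk
    simp only [Finset.mem_range] at hk
    have hk' : k ≤ n := Nat.lt_succ_iff.mp hk
    simp only [Nat.add_sub_cancel]
    rw [Nat.choose_symm hk']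
    push_cast [Nat.cast_sub hk']
    ring_nf
  have h2 : (2 : ℤ) * ∑ k ∈ range (n + 1), (k : ℤ) * n.choose k
      = ∑ k ∈ range (n + 1), (n : ℤ) * n.choose k := by
    rw [two_mul]
    nth_rewrite 2 [h1]
    rw [← Finset.sum_add_distrib]
    apply Finset.sum_congr rfl
    intro k _
    ring
  rw [h2, ← Finset.mul_sum]
  congr 1
  have := Nat.sum_range_choose n
  exact_mod_cast congrArg (Nat.cast : ℕ → ℤ) this

lemma telescope (m : ℕ) :
    ∑ k ∈ Finset.Ico m (2 * m + 1), (((k : ℤ) * (2 * m).choose k)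
        - ((k + 1 : ℤ) * (2 * m).choose (k + 1)))
      = m * (2 * m).choose m := by
  have h : ∀ N, ∑ k ∈ Finset.Ico m (m + N), (((k : ℤ) * (2 * m).choose k)
        - ((k + 1 : ℤ) * (2 * m).choose (k + 1)))
      = m * (2 * m).choose m - (m + N) * (2 * m).choose (m + N) := by
    intro N
    induction N with
    | zero => simp
    | succ N ih =>
      rw [← Nat.add_assoc, Finset.sum_Ico_succ_top (by omega), ih]
      push_cast
      ring
  have h2 := h (m + 1)
  have harr : m + (m + 1) = 2 * m + 1 := by ring
  rw [harr] at h2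
  rw [h2]
  simp [Nat.choose_succ_self]

lemma key_s13 (m : ℕ) :
    ∑ k ∈ range (2 * m + 1), ((min k (2 * m - k) : ℕ) : ℤ) * (2 * m).choose k
      = m * 2 ^ (2 * m) - m * (2 * m).choose m := by
  set n := 2 * m with hn
  have hsplit : ∀ k ∈ range (n + 1),
      ((min k (n - k) : ℕ) : ℤ) * n.choose k
        = (k : ℤ) * n.choose k - (if m ≤ k then ((k : ℤ) * n.choose k - (k + 1 : ℤ) * n.choose (k + 1)) else 0) := by
    intro k hk
    simp only [Finset.mem_range] at hk
    have hk' : k ≤ n := by omega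
    by_cases h : m ≤ k
    · have hmin : min k (n - k) = n - k := by
        apply min_eq_right; omega
      have hstep : ((k : ℤ) + 1) * n.choose (k + 1) = ((n : ℤ) - k) * n.choose k := by
        have hcr := Nat.choose_succ_right_eq n k
        have h2 : ((n.choose (k + 1) : ℤ)) * (k + 1) = (n.choose k : ℤ) * ((n : ℤ) - k) := by
          rw [← Nat.cast_sub hk']
          exact_mod_cast congrArg (Nat.cast : ℕ → ℤ) hcr
        linarith [h2]
      rw [hmin, if_pos h, hstep]
      rw [Nat.cast_sub hk']
      ring
    · have hmin : min k (n - k) = k := by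
        apply min_eq_left; omega
      rw [hmin, if_neg h]
      ring
  rw [Finset.sum_congr rfl hsplit, Finset.sum_sub_distrib]
  have hT : ∑ k ∈ range (n + 1),
      (if m ≤ k then ((k : ℤ) * n.choose k - (k + 1 : ℤ) * n.choose (k + 1)) else 0)
      = m * n.choose m := by
    rw [← Finset.sum_filter]
    have hfil : Finset.filter (fun k => m ≤ k) (range (n + 1)) = Finset.Ico m (n + 1) := by
      ext k
      simp only [Finset.mem_filter, Finset.mem_range, Finset.mem_Ico]
      omega
    rw [hfil]
    exact telescope m
  rw [hT]
  have hS := sum_k_choose n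
  have hsum : ∑ k ∈ range (n + 1), (k : ℤ) * n.choose k = m * 2 ^ n := by
    have h3 : (n : ℤ) * 2 ^ n = 2 * (m * 2 ^ n) := by
      rw [hn]; push_cast; ring
    omega
  rw [hsum]

/-- For even `n`, `Σ_{k=0}^{n} min(k, n-k)·C(n,k) = (n/2)·(2ⁿ − C(n, n/2))`;
equivalently, for a binomial random variable `Y` with parameters `n` and `1/2`,
`E[min(Y, n−Y)] = (n/2)·(1 − C(n, n/2)/2ⁿ)`. -/
theorem stmt_13 (n : ℕ) (hn : Even n) :
    (∑ k ∈ Finset.range (n + 1), min k (n - k) * n.choose k =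
      n / 2 * (2 ^ n - n.choose (n / 2))) ∧
    ∑ k ∈ Finset.range (n + 1),
        (min k (n - k) : ℝ) * (n.choose k : ℝ) / 2 ^ n =
      (n / 2 : ℝ) * (1 - (n.choose (n / 2) : ℝ) / 2 ^ n) := by
  obtain ⟨m, rfl⟩ : ∃ m, n = 2 * m := ⟨n / 2, by obtain ⟨r, hr⟩ := hn; omega⟩
  have hdiv : 2 * m / 2 = m := by omega
  have hchle : (2 * m).choose m ≤ 2 ^ (2 * m) := by
    calc (2 * m).choose m ≤ ∑ k ∈ range (2 * m + 1), (2 * m).choose k :=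
          Finset.single_le_sum (f := fun k => (2 * m).choose k) (fun _ _ => Nat.zero_le _)
            (by simp only [Finset.mem_range]; omega)
      _ = 2 ^ (2 * m) := Nat.sum_range_choose (2 * m)
  have hkey := key_s13 m
  have hnat : ∑ k ∈ Finset.range (2 * m + 1), min k (2 * m - k) * (2 * m).choose k =
      m * (2 ^ (2 * m) - (2 * m).choose m) := by
    have hcast : ((∑ k ∈ Finset.range (2 * m + 1), min k (2 * m - k) * (2 * m).choose k : ℕ) : ℤ)
        = ((m * (2 ^ (2 * m) - (2 * m).choose m) : ℕ) : ℤ) := by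
      rw [Nat.cast_sum]
      simp only [Nat.cast_mul]
      rw [hkey, Nat.cast_sub hchle]
      push_cast
      ring
    exact_mod_cast hcast
  refine ⟨by rw [hdiv]; exact hnat, ?_⟩
  have hmid : (∑ k ∈ Finset.range (2 * m + 1),
        ((min k (2 * m - k) * (2 * m).choose k : ℕ) : ℝ)) / 2 ^ (2 * m)
      = ((2 * m : ℕ) : ℝ) / 2 * (1 - (((2 * m).choose (2 * m / 2) : ℕ) : ℝ) / 2 ^ (2 * m)) := by
    rw [← Nat.cast_sum, hnat, hdiv, Nat.cast_mul, Nat.cast_sub hchle]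
    have h2 : (0:ℝ) < 2 ^ (2 * m) := by positivity
    push_cast
    field_simp
  refine Eq.trans ?_ hmid
  rw [← Finset.sum_div]
  congr 1
  apply Finset.sum_congr rfl
  intro k hk
  simp only [Finset.mem_range] at hk
  have hk' : k ≤ 2 * m := by omega
  push_cast [Nat.cast_sub hk']
  ring
end

section
/- Let N ≥ 1 and y be natural numbers and let p be a real number. Then Σ over all functions f : {1,…,y} → {0,1,…,N} such that there exists i ∈ {1,…,N} with i ∉ range(f), of p^{|{j : f(j) ≠ 0}|} · (1−N·p)^{|{j : f(j) = 0}|}, equals Σ_{k=1}^{N} (−1)^{k−1}·C(N,k)·(1−k·p)^{y}. In probabilistic terms: if y independent columns each equal symbol i with probability p for each i ∈ {1,…,N} and symbol 0 with probability 1−Np, then the probability that some symbol i ∈ {1,…,N} is avoided by all columns equals Σ_{k=1}^{N} (−1)^{k−1}·C(N,k)·(1−kp)^{y}. -/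
/-!
Weight a function `f : Fin y → Fin (N + 1)` by `∏ j, w (f j)`, where `w` gives each nonzero symbol
weight `p` and `0` weight `1 - N p`, so that the total weight of all functions is `(∑ v, w v) ^ y = 1`.
The functions avoiding a given set `T` of nonzero symbols are those with values in `Tᶜ`, of total
weight `(1 - #T p) ^ y`. Inclusion–exclusion over `T` then gives the weight of the functions hitting
every nonzero symbol as `∑ₖ (-1)ᵏ C(N, k) (1 - k p) ^ y`, and the claim is its complement in `1`.
-/

open Finset

theorem sum_prod_of_forall_mem_exists_eq {ι α R : Type*} [Fintype ι] [DecidableEq ι] [Fintype α]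
    [DecidableEq α] [CommRing R] (s : Finset α)
    [DecidablePred fun f : ι → α => ∀ a ∈ s, ∃ j, f j = a] (g : α → R) :
    ∑ f : ι → α with ∀ a ∈ s, ∃ j, f j = a, ∏ j, g (f j) =
      ∑ t ∈ s.powerset, (-1) ^ #t * (∑ a ∈ tᶜ, g a) ^ Fintype.card ι := by
  have hcover : s.inf (fun a => ({f | ∀ j, f j ≠ a} : Finset (ι → α))ᶜ) =
      ({f | ∀ a ∈ s, ∃ j, f j = a} : Finset (ι → α)) := by
    ext f; simp [mem_inf]
  have havoid (t : Finset α) : t.inf (fun a => ({f | ∀ j, f j ≠ a} : Finset (ι → α))) =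
      Fintype.piFinset fun _ => tᶜ := by
    ext f; simp only [mem_inf, Fintype.mem_piFinset, mem_compl, mem_filter_univ]; grind
  rw [← hcover, inclusion_exclusion_sum_inf_compl]
  refine sum_congr rfl fun t _ => ?_
  rw [havoid, sum_prod_piFinset, prod_const, card_univ, zsmul_eq_mul, Int.cast_pow, Int.cast_neg,
    Int.cast_one]

theorem sub_sum_range_choose_eq_sum_Icc {R : Type*} [CommRing R] (N : ℕ) (h : ℕ → R) :
    h 0 - ∑ k ∈ range (N + 1), (N.choose k : R) * ((-1) ^ k * h k) =
      ∑ k ∈ Icc 1 N, (-1) ^ (k - 1) * (N.choose k : R) * h k := by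
  rw [sum_range_eq_add_Ico _ (Nat.succ_pos N), Nat.succ_eq_add_one, Ico_add_one_right_eq_Icc,
    sub_add_eq_sub_sub, Nat.choose_zero_right, pow_zero, Nat.cast_one, one_mul, one_mul, sub_self,
    zero_sub, ← sum_neg_distrib]
  refine sum_congr rfl fun k hk => ?_
  obtain ⟨k, rfl⟩ := Nat.exists_eq_add_of_le' (mem_Icc.1 hk).1
  rw [Nat.add_sub_cancel, pow_succ]
  ring

section ColumnWeight

variable {R : Type*} [CommRing R] {N : ℕ}

/-- The law of one exponent chain: symbol `i ≠ 0` means a cycle for scale value `i`, symbol `0` no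
cycle at all. -/
def columnWeight (N : ℕ) (p : R) (v : Fin (N + 1)) : R :=
  if v = 0 then 1 - N * p else p

theorem columnWeight_zero (p : R) : columnWeight N p 0 = 1 - N * p := if_pos rfl

theorem columnWeight_of_ne_zero (p : R) {v : Fin (N + 1)} (hv : v ≠ 0) : columnWeight N p v = p :=
  if_neg hv

theorem sum_compl_columnWeight (p : R) {T : Finset (Fin (N + 1))} (hT : 0 ∉ T) :
    ∑ v ∈ Tᶜ, columnWeight N p v = 1 - #T * p := by
  have htotal : ∑ v, columnWeight N p v = 1 := by
    rw [Fintype.sum_eq_add_sum_compl 0, columnWeight_zero, sum_congr rfl fun v hv =>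
      columnWeight_of_ne_zero p (mem_compl.1 hv ∘ mem_singleton.2), sum_const,
      card_compl, card_singleton, Fintype.card_fin, Nat.add_sub_cancel, nsmul_eq_mul]
    ring
  have hT : ∑ v ∈ T, columnWeight N p v = #T * p := by
    rw [sum_congr rfl fun v hv => columnWeight_of_ne_zero p (ne_of_mem_of_not_mem hv hT), sum_const,
      nsmul_eq_mul]
  rw [← sum_compl_add_sum T] at htotal
  linear_combination htotal - hT

variable {y : ℕ}

theorem prod_columnWeight (p : R) (f : Fin y → Fin (N + 1)) :
    ∏ j, columnWeight N p (f j) = p ^ #{j | f j ≠ 0} * (1 - N * p) ^ #{j | f j = 0} := by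
  simp only [columnWeight]
  rw [prod_ite, prod_const, prod_const, mul_comm]

theorem sum_prod_columnWeight (p : R) :
    ∑ f : Fin y → Fin (N + 1), ∏ j, columnWeight N p (f j) = 1 := by
  rw [← Fintype.sum_pow, ← compl_empty, sum_compl_columnWeight p (notMem_empty 0), card_empty,
    Nat.cast_zero, zero_mul, sub_zero, one_pow]

theorem sum_prod_columnWeight_of_forall_ne_zero_mem_range (p : R) :
    ∑ f : Fin y → Fin (N + 1) with ∀ a ∈ univ.erase 0, ∃ j, f j = a,
        ∏ j, columnWeight N p (f j) =
      ∑ k ∈ range (N + 1), (N.choose k : R) * ((-1) ^ k * (1 - k * p) ^ y) := by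
  rw [sum_prod_of_forall_mem_exists_eq, Fintype.card_fin, sum_congr rfl fun t ht => by
      rw [sum_compl_columnWeight p fun h0 => by simpa using mem_powerset.1 ht h0],
    sum_powerset_apply_card (fun k => (-1 : R) ^ k * (1 - k * p) ^ y), card_erase_of_mem
    (mem_univ _), card_univ, Fintype.card_fin, Nat.add_sub_cancel]
  simp only [nsmul_eq_mul]

end ColumnWeight

theorem stmt_17_general (N : ℕ) (y : ℕ) (p : ℝ) :
    ∑ f ∈ Finset.univ.filter
        (fun f : Fin y → Fin (N + 1) => ∃ i : Fin (N + 1), i ≠ 0 ∧ ∀ j, f j ≠ i),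
      p ^ (Finset.univ.filter (fun j => f j ≠ 0)).card *
        (1 - N * p) ^ (Finset.univ.filter (fun j => f j = 0)).card =
    ∑ k ∈ Finset.Icc 1 N,
      (-1 : ℝ) ^ (k - 1) * (N.choose k : ℝ) * (1 - k * p) ^ y := by
  have hsplit := sum_filter_add_sum_filter_not univ
    (fun f : Fin y → Fin (N + 1) => ∃ i : Fin (N + 1), i ≠ 0 ∧ ∀ j, f j ≠ i)
    fun f => ∏ j, columnWeight N p (f j)
  have hcover (f : Fin y → Fin (N + 1)) :
      (¬ ∃ i : Fin (N + 1), i ≠ 0 ∧ ∀ j, f j ≠ i) ↔ ∀ a ∈ univ.erase 0, ∃ j, f j = a := by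
    simp [mem_erase]
  rw [filter_congr fun f _ => hcover f, sum_prod_columnWeight_of_forall_ne_zero_mem_range,
    sum_prod_columnWeight] at hsplit
  simp_rw [← prod_columnWeight]
  rw [eq_sub_of_add_eq hsplit, ← sub_sum_range_choose_eq_sum_Icc N fun k => (1 - k * p) ^ y,
    Nat.cast_zero, zero_mul, sub_zero, one_pow]

/-- Inclusion–exclusion for the probability that some scale value produces no cycle:
summing `p^{#{j : f j ≠ 0}} · (1−Np)^{#{j : f j = 0}}` over all functions
`f : {1,…,y} → {0,1,…,N}` avoiding at least one nonzero symbol equals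
`Σ_{k=1}^{N} (−1)^{k−1}·C(N,k)·(1−kp)^y`, as a polynomial identity in the real `p`. -/
theorem stmt_17 (N : ℕ) (hN : 1 ≤ N) (y : ℕ) (p : ℝ) :
    ∑ f ∈ Finset.univ.filter
        (fun f : Fin y → Fin (N + 1) => ∃ i : Fin (N + 1), i ≠ 0 ∧ ∀ j, f j ≠ i),
      p ^ (Finset.univ.filter (fun j => f j ≠ 0)).card *
        (1 - N * p) ^ (Finset.univ.filter (fun j => f j = 0)).card =
    ∑ k ∈ Finset.Icc 1 N,
      (-1 : ℝ) ^ (k - 1) * (N.choose k : ℝ) * (1 - k * p) ^ y :=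
  stmt_17_general N y p
end

section
/- Let N ≥ 1 and y be natural numbers with y ≥ N. Then in the polynomial ring ℝ[X], the polynomial 1 − Σ_{k=1}^{N} (−1)^{k−1}·C(N,k)·(1−k·X)^{y} is divisible by X^N. Consequently, with p_fl = 5/(4(2q−1)) = O(1/q), the probability of absence of 4-cycles after floor scale modulo lifting with N scale values satisfies P_fsml(N) = 1 − O(q^{−N}) as q → ∞. -/
open Polynomial Finset


lemma alt_sum : ∀ (d N : ℕ), d < N →
    ∑ k ∈ Finset.range (N+1), (-1:ℝ)^k * N.choose k * (k:ℝ)^d = 0 := by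
  intro d
  induction d using Nat.strong_induction_on with
  | _ d ih =>
    match d with
    | 0 =>
      intro N hdN
      have h0 := add_pow (-1:ℝ) 1 N
      simp only [neg_add_cancel, one_pow, mul_one, zero_pow (by omega : N ≠ 0)] at h0
      simpa using h0.symm
    | e + 1 =>
      intro N hdN
      obtain ⟨M, rfl⟩ : ∃ M, N = M + 1 := ⟨N - 1, by omega⟩
      rw [Finset.sum_range_succ']
      have key : ∀ k ∈ Finset.range (M+1),
          (-1:ℝ)^(k+1) * ((M+1).choose (k+1) : ℝ) * (((k+1 : ℕ)):ℝ)^(e+1)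
          = ∑ j ∈ Finset.range (e+1),
              (-((M:ℝ)+1) * (e.choose j)) * ((-1:ℝ)^k * (M.choose k) * (k:ℝ)^j) := by
        intro k _
        have h := Nat.add_one_mul_choose_eq M k
        have hc : ((M+1).choose (k+1) : ℝ) * ((k:ℝ)+1) = ((M:ℝ)+1) * (M.choose k : ℝ) := by
          exact_mod_cast h.symm
        have hb : ((k:ℝ)+1)^e = ∑ j ∈ Finset.range (e+1), (k:ℝ)^j * e.choose j := by
          have := add_pow (k:ℝ) 1 e
          simpa using this
        push_cast
        calc (-1:ℝ)^(k+1) * ((M+1).choose (k+1) : ℝ) * ((k:ℝ)+1)^(e+1)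
            = ((-1:ℝ)^(k+1) * (((M+1).choose (k+1) : ℝ) * ((k:ℝ)+1))) * ((k:ℝ)+1)^e := by ring
          _ = ((-1:ℝ)^(k+1) * (((M:ℝ)+1) * (M.choose k : ℝ))) * ∑ j ∈ Finset.range (e+1), (k:ℝ)^j * e.choose j := by
              rw [hc, hb]
          _ = ∑ j ∈ Finset.range (e+1), (-((M:ℝ)+1) * (e.choose j)) * ((-1:ℝ)^k * (M.choose k) * (k:ℝ)^j) := by
              rw [Finset.mul_sum]
              apply Finset.sum_congr rfl
              intro j _
              rw [pow_succ]
              ring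
      rw [Finset.sum_congr rfl key, Finset.sum_comm]
      have hz : ∀ j ∈ Finset.range (e+1),
          ∑ k ∈ Finset.range (M+1), (-((M:ℝ)+1) * (e.choose j)) * ((-1:ℝ)^k * (M.choose k) * (k:ℝ)^j) = 0 := by
        intro j hj
        rw [← Finset.mul_sum]
        have hj' : j < e + 1 := Finset.mem_range.mp hj
        have hjM : j < M := by omega
        rw [show M = (M-1)+1 from by omega] at hjM ⊢
        rw [ih j hj' ((M-1)+1) hjM, mul_zero]
      rw [Finset.sum_eq_zero hz]
      simp

lemma alt_sum_Icc (d N : ℕ) (h : d < N) :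
    ∑ k ∈ Finset.Icc 1 N, (-1:ℝ)^(k-1) * N.choose k * (k:ℝ)^d
    = if d = 0 then 1 else 0 := by
  have h0 := alt_sum d N h
  rw [Finset.sum_range_succ'] at h0
  have hIcc : ∑ k ∈ Finset.Icc 1 N, (-1:ℝ)^(k-1) * N.choose k * (k:ℝ)^d
      = ∑ k ∈ Finset.range N, (-1:ℝ)^k * N.choose (k+1) * ((k+1:ℕ):ℝ)^d := by
    rw [← Finset.Ico_add_one_right_eq_Icc, Finset.sum_Ico_eq_sum_range]
    simp [add_comm 1]
  rw [hIcc]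
  have hterm : ∀ k ∈ Finset.range N, (-1:ℝ)^(k+1) * N.choose (k+1) * ((k+1:ℕ):ℝ)^d
      = -((-1:ℝ)^k * N.choose (k+1) * ((k+1:ℕ):ℝ)^d) := by
    intro k _; rw [pow_succ]; ring
  rw [Finset.sum_congr rfl hterm, Finset.sum_neg_distrib] at h0
  simp only [Nat.cast_zero, pow_zero, one_mul, Nat.choose_zero_right, Nat.cast_one] at h0
  have : ∑ k ∈ Finset.range N, (-1:ℝ)^k * N.choose (k+1) * ((k+1:ℕ):ℝ)^d = (0:ℝ)^d := by
    linarith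
  rw [this, zero_pow_eq]
lemma coeff_expand (k : ℝ) (y d : ℕ) (hd : d ≤ y) :
    (((1 : ℝ[X]) - C k * X)^y).coeff d = (-k)^d * y.choose d := by
  have h1 : ((1 : ℝ[X]) - C k * X)^y = ∑ i ∈ Finset.range (y+1), C ((-k)^i * y.choose i) * X^i := by
    rw [sub_eq_add_neg, add_comm, add_pow]
    apply Finset.sum_congr rfl
    intro i _
    rw [show -(C k * X) = C (-k) * X from by rw [map_neg]; ring]
    rw [mul_pow, ← C_pow, one_pow, mul_one]
    rw [map_mul, C_eq_natCast]
    push_cast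
    ring
  rw [h1, finset_sum_coeff]
  simp only [coeff_C_mul, coeff_X_pow]
  rw [Finset.sum_eq_single d]
  · simp
  · intro i _ hne; simp [Ne.symm hne]
  · intro hmem; exact absurd (Finset.mem_range.mpr (by omega)) hmem

/-- For `1 ≤ N ≤ y`, the polynomial `1 − Σ_{k=1}^{N} (−1)^{k−1}·C(N,k)·(1−kX)^y` in
`ℝ[X]` is divisible by `X^N`.  Consequently, with `p_fl = 5/(4(2q−1)) = O(1/q)`, the
probability `P_fsml(N) = Σ_{k=1}^{N} (−1)^{k−1}·C(N,k)·(1−k·p_fl)^y` of absence of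
4-cycles after floor scale modulo lifting with `N` scale values satisfies
`P_fsml(N) = 1 − O(q^{−N})` as `q → ∞`. -/
theorem stmt_19 (N : ℕ) (hN : 1 ≤ N) (y : ℕ) (hy : N ≤ y) :
    (X : ℝ[X]) ^ N ∣
      (1 - ∑ k ∈ Finset.Icc 1 N,
        C ((-1 : ℝ) ^ (k - 1) * (N.choose k : ℝ)) * (1 - C (k : ℝ) * X) ^ y) ∧
    ∃ c : ℝ, ∀ q : ℕ, 2 < q →
      |1 - ∑ k ∈ Finset.Icc 1 N,
          (-1 : ℝ) ^ (k - 1) * (N.choose k : ℝ) *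
            (1 - k * (5 / (4 * (2 * (q : ℝ) - 1)))) ^ y| ≤ c / (q : ℝ) ^ N := by
  set P : ℝ[X] := 1 - ∑ k ∈ Finset.Icc 1 N,
        C ((-1 : ℝ) ^ (k - 1) * (N.choose k : ℝ)) * (1 - C (k : ℝ) * X) ^ y with hP
  have hdvd : (X : ℝ[X]) ^ N ∣ P := by
    rw [Polynomial.X_pow_dvd_iff]
    intro d hd
    rw [hP, coeff_sub, coeff_one, finset_sum_coeff]
    have hterm : ∀ k ∈ Finset.Icc 1 N,
        (C ((-1 : ℝ) ^ (k - 1) * (N.choose k : ℝ)) * (1 - C (k : ℝ) * X) ^ y).coeff d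
        = ((-1:ℝ)^d * y.choose d) * ((-1 : ℝ) ^ (k - 1) * (N.choose k : ℝ) * (k:ℝ)^d) := by
      intro k _
      rw [coeff_C_mul, coeff_expand _ _ _ (le_trans (le_of_lt hd) hy), neg_pow]
      ring
    rw [Finset.sum_congr rfl hterm, ← Finset.mul_sum, alt_sum_Icc d N hd]
    split_ifs with h
    · subst h; simp
    · simp
  refine ⟨hdvd, ?_⟩
  obtain ⟨Q, hQ⟩ := hdvd
  obtain ⟨M, hM⟩ := (isCompact_Icc (a := (0:ℝ)) (b := 1)).exists_bound_of_continuousOn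
    (Q.continuous.continuousOn)
  have hM0 : 0 ≤ M := le_trans (norm_nonneg _) (hM 0 (by norm_num))
  refine ⟨M * (5/4)^N, ?_⟩
  intro q hq
  have hq3 : (3:ℝ) ≤ (q:ℝ) := by exact_mod_cast hq
  set p : ℝ := 5 / (4 * (2 * (q : ℝ) - 1)) with hp
  have hden : (0:ℝ) < 4 * (2 * (q:ℝ) - 1) := by nlinarith
  have hp0 : 0 ≤ p := by positivity
  have hp1 : p ≤ 1 := by
    rw [hp, div_le_one hden]; nlinarith
  have hpq : p ≤ 5 / (4 * (q:ℝ)) := by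
    rw [hp]
    apply div_le_div_of_nonneg_left (by norm_num) (by positivity)
    nlinarith
  have heval : 1 - ∑ k ∈ Finset.Icc 1 N,
      (-1 : ℝ) ^ (k - 1) * (N.choose k : ℝ) * (1 - k * p) ^ y = P.eval p := by
    rw [hP]
    simp [eval_finset_sum]
  rw [heval, hQ]
  rw [eval_mul, eval_pow, eval_X, abs_mul, abs_pow, abs_of_nonneg hp0]
  have hQb : |Q.eval p| ≤ M := hM p ⟨hp0, hp1⟩
  have hqpos : (0:ℝ) < (q:ℝ) := by linarith
  calc p ^ N * |Q.eval p| ≤ (5 / (4 * (q:ℝ))) ^ N * M := by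
        apply mul_le_mul (pow_le_pow_left₀ hp0 hpq N) hQb (abs_nonneg _)
        positivity
    _ = M * (5/4)^N / (q:ℝ)^N := by
        rw [show (5 / (4 * (q:ℝ))) = (5/4) / (q:ℝ) from by ring, div_pow]
        ring
end
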